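/- arXiv:math/0202236 — 6 statements merged into one kernel-verified Lean document; each statement's English description precedes it below -/
import Mathlib

section
/- Let T₀, T₁ : [0,1] → S² ⊂ ℝ³ be C¹ curves on the unit sphere with T₀(t) ≠ −T₁(t) for all t. Define u(θ,t) = cos θ · T₀(t) + sin θ · T₁(t). Then the spherical area swept out by the normalized interpolation v(θ,t) = u(θ,t)/|u(θ,t)| for (θ,t) ∈ [0, π/2] × [0,1], computed as the integral of the pullback of the area form, satisfies ∫₀¹ ∫₀^{π/2} (1/|u(θ,t)|³) · ((∂u/∂θ) × (∂u/∂t) · u(θ,t)) dθ dt = ∫₀¹ ((T₀(t) × T₁(t))/(1 + T₀(t)·T₁(t))) · (T₀'(t) + T₁'(t)) dt. -/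
noncomputable section

/-- Cross product on `ℝ³`. -/
def cross3 (v w : EuclideanSpace ℝ (Fin 3)) : EuclideanSpace ℝ (Fin 3) :=
  WithLp.toLp 2 ![v 1 * w 2 - v 2 * w 1, v 2 * w 0 - v 0 * w 2, v 0 * w 1 - v 1 * w 0]

/-- Euclidean inner product on `ℝ³`. -/
def dot3 (v w : EuclideanSpace ℝ (Fin 3)) : ℝ := inner ℝ v w

/-! For fixed `t` write `a = T₀ t`, `b = T₁ t`, `d = a · b`, `A = (a × b) · T₀' t` and
`B = (a × b) · T₁' t`. Since `T₀, T₁` are unit vectors, `‖u‖² = 1 + 2 d sin θ cos θ` and the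
triple product collapses to `A cos θ + B sin θ`, so the inner integral is
`∫₀^{π/2} (A cos θ + B sin θ) / (1 + 2 d sin θ cos θ)^{3/2} dθ`. For `|d| < 1` this has the
primitive `(A (u · b) - B (u · a)) / ((1 - d²) ‖u‖)`, whose increment is `(A + B) / (1 + d)`.
Non-antipodality gives `d > -1`; in the remaining case `d = 1` we have `a = b`, and both sides
vanish because `a × a = 0`. -/

open Real intervalIntegral

lemma cross3_self (a : EuclideanSpace ℝ (Fin 3)) : cross3 a a = 0 := by
  ext i; fin_cases i <;> simp [cross3, mul_comm]

lemma dot3_cross3_smul_add_smul (a b a' b' : EuclideanSpace ℝ (Fin 3)) (c s : ℝ) :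
    dot3 (cross3 ((-s) • a + c • b) (c • a' + s • b')) (c • a + s • b)
      = (c ^ 2 + s ^ 2) * (dot3 (cross3 a b) a' * c + dot3 (cross3 a b) b' * s) := by
  simp only [dot3, cross3, PiLp.inner_apply, Fin.sum_univ_three, PiLp.add_apply, PiLp.neg_apply,
    PiLp.smul_apply, smul_eq_mul, neg_smul, RCLike.inner_apply, conj_trivial, Matrix.cons_val]
  ring

lemma norm_cos_smul_add_sin_smul {F : Type*} [NormedAddCommGroup F] [InnerProductSpace ℝ F]
    {a b : F} (ha : ‖a‖ = 1) (hb : ‖b‖ = 1) (θ : ℝ) :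
    ‖cos θ • a + sin θ • b‖ = √(1 + 2 * inner ℝ a b * (sin θ * cos θ)) := by
  rw [← Real.sqrt_sq (norm_nonneg _), norm_add_sq_real, norm_smul, norm_smul,
    real_inner_smul_left, real_inner_smul_right, ha, hb]
  congr 1
  simp only [Real.norm_eq_abs, mul_one, sq_abs]
  linear_combination sin_sq_add_cos_sq θ

lemma one_add_mul_sin_mul_cos_pos {d : ℝ} (hd : |d| < 1) (θ : ℝ) :
    0 < 1 + 2 * d * (sin θ * cos θ) := by
  have h : |2 * (sin θ * cos θ)| ≤ 1 := by
    rw [← mul_assoc, ← sin_two_mul]; exact abs_sin_le_one _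
  have h' : |d * (2 * (sin θ * cos θ))| < 1 := by
    rw [abs_mul]; exact (mul_le_of_le_one_right (abs_nonneg d) h).trans_lt hd
  linarith [neg_abs_le (d * (2 * (sin θ * cos θ)))]

lemma hasDerivAt_primitive_cos_sin_div_sqrt_cube {d : ℝ} (hd : |d| < 1) (A B θ : ℝ) :
    HasDerivAt
      (fun θ => (A * (sin θ + d * cos θ) - B * (cos θ + d * sin θ)) /
        ((1 - d ^ 2) * √(1 + 2 * d * (sin θ * cos θ))))
      ((A * cos θ + B * sin θ) / √(1 + 2 * d * (sin θ * cos θ)) ^ 3) θ := by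
  have hq := one_add_mul_sin_mul_cos_pos hd θ
  have hk : 1 - d ^ 2 ≠ 0 := by nlinarith [abs_lt.mp hd]
  have hS : 0 < √(1 + 2 * d * (sin θ * cos θ)) := Real.sqrt_pos.mpr hq
  have hnum : HasDerivAt (fun θ => A * (sin θ + d * cos θ) - B * (cos θ + d * sin θ))
      (A * (cos θ - d * sin θ) - B * (-sin θ + d * cos θ)) θ :=
    ((((hasDerivAt_sin θ).add ((hasDerivAt_cos θ).const_mul d)).const_mul A).sub
      (((hasDerivAt_cos θ).add ((hasDerivAt_sin θ).const_mul d)).const_mul B)).congr_deriv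
      (by ring)
  have hden : HasDerivAt (fun θ => (1 - d ^ 2) * √(1 + 2 * d * (sin θ * cos θ)))
      ((1 - d ^ 2) * (2 * d * (cos θ * cos θ + sin θ * -sin θ) /
        (2 * √(1 + 2 * d * (sin θ * cos θ))))) θ :=
    ((((hasDerivAt_sin θ).mul (hasDerivAt_cos θ)).const_mul (2 * d)).const_add 1
      |>.sqrt hq.ne').const_mul (1 - d ^ 2)
  refine (hnum.div hden (mul_ne_zero hk hS.ne')).congr_deriv ?_
  have hS2 := Real.sq_sqrt hq.le
  generalize √(1 + 2 * d * (sin θ * cos θ)) = S at hS hS2 ⊢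
  rw [div_eq_div_iff (by positivity) (by positivity)]
  field_simp
  linear_combination (A * (cos θ - d * sin θ) - B * (-sin θ + cos θ * d)) * hS2 +
    (A * d * sin θ - A * d ^ 2 * cos θ + B * d * cos θ - B * d ^ 2 * sin θ) * sin_sq_add_cos_sq θ

lemma integral_cos_sin_div_sqrt_cube {d : ℝ} (hd : |d| < 1) (A B : ℝ) :
    ∫ θ in (0:ℝ)..(π / 2), (A * cos θ + B * sin θ) / √(1 + 2 * d * (sin θ * cos θ)) ^ 3
      = (A + B) / (1 + d) := by
  have hk : 1 - d ^ 2 ≠ 0 := by nlinarith [abs_lt.mp hd]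
  have hd' : 1 + d ≠ 0 := by linarith [abs_lt.mp hd]
  have hcont : Continuous fun θ =>
      (A * cos θ + B * sin θ) / √(1 + 2 * d * (sin θ * cos θ)) ^ 3 := by
    have hden : ∀ θ, √(1 + 2 * d * (sin θ * cos θ)) ^ 3 ≠ 0 := fun θ =>
      pow_ne_zero 3 (Real.sqrt_pos.mpr (one_add_mul_sin_mul_cos_pos hd θ)).ne'
    fun_prop (disch := exact hden _)
  rw [integral_eq_sub_of_hasDerivAt
    (fun θ _ => hasDerivAt_primitive_cos_sin_div_sqrt_cube hd A B θ) (hcont.intervalIntegrable _ _)]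
  simp only [sin_pi_div_two, cos_pi_div_two, sin_zero, cos_zero, mul_zero, zero_mul, add_zero,
    Real.sqrt_one]
  field_simp
  ring

lemma hasDerivAt_cos_smul_add_sin_smul {E : Type*} [NormedAddCommGroup E] [NormedSpace ℝ E]
    (a b : E) (θ : ℝ) :
    HasDerivAt (fun θ => cos θ • a + sin θ • b) ((-sin θ) • a + cos θ • b) θ :=
  ((hasDerivAt_cos θ).smul_const a).add ((hasDerivAt_sin θ).smul_const b)

lemma integral_ribbon_fiber {a b : EuclideanSpace ℝ (Fin 3)} (ha : ‖a‖ = 1) (hb : ‖b‖ = 1)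
    (hab : a ≠ -b) (a' b' : EuclideanSpace ℝ (Fin 3)) :
    ∫ θ in (0:ℝ)..(π / 2), (1 / ‖cos θ • a + sin θ • b‖ ^ 3) *
        dot3 (cross3 ((-sin θ) • a + cos θ • b) (cos θ • a' + sin θ • b')) (cos θ • a + sin θ • b)
      = dot3 (cross3 a b) (a' + b') / (1 + dot3 a b) := by
  have hintegrand : ∀ θ, (1 / ‖cos θ • a + sin θ • b‖ ^ 3) *
        dot3 (cross3 ((-sin θ) • a + cos θ • b) (cos θ • a' + sin θ • b')) (cos θ • a + sin θ • b)
      = (dot3 (cross3 a b) a' * cos θ + dot3 (cross3 a b) b' * sin θ) /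
          √(1 + 2 * dot3 a b * (sin θ * cos θ)) ^ 3 := fun θ => by
    rw [dot3_cross3_smul_add_smul, cos_sq_add_sin_sq, one_mul, norm_cos_smul_add_sin_smul ha hb,
      one_div_mul_eq_div]
    rfl
  simp_rw [hintegrand]
  have hd : -1 < dot3 a b := (neg_one_le_real_inner_of_norm_eq_one ha hb).lt_of_ne
    fun h => hab ((inner_eq_neg_one_iff_of_norm_eq_one ha hb).mp h.symm)
  rcases (real_inner_le_one_of_norm_eq_one ha hb).lt_or_eq with hd₁ | hab₁
  · rw [integral_cos_sin_div_sqrt_cube (abs_lt.mpr ⟨hd, hd₁⟩)]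
    simp only [dot3, inner_add_right]
  · obtain rfl := (inner_eq_one_iff_of_norm_eq_one ha hb).mp hab₁
    simp [cross3_self, dot3]

/-- Let `T₀, T₁ : [0,1] → S²` be `C¹` curves on the unit sphere which are
never antipodal, and let `u θ t = cos θ • T₀ t + sin θ • T₁ t`. Then the spherical area
swept out by the normalized interpolation `v = u/|u|` on `[0, π/2] × [0,1]`, computed as the
integral of the pullback of the area form, equals the Fuller ribbon integral
`∫₀¹ ((T₀ × T₁)/(1 + T₀·T₁)) · (T₀' + T₁') dt`. -/
theorem ribbon_area_formula
    (T₀ T₁ : ℝ → EuclideanSpace ℝ (Fin 3))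
    (hC₀ : ContDiff ℝ 1 T₀) (hC₁ : ContDiff ℝ 1 T₁)
    (hS₀ : ∀ t ∈ Set.Icc (0:ℝ) 1, ‖T₀ t‖ = 1)
    (hS₁ : ∀ t ∈ Set.Icc (0:ℝ) 1, ‖T₁ t‖ = 1)
    (hanti : ∀ t ∈ Set.Icc (0:ℝ) 1, T₀ t ≠ -T₁ t)
    (u : ℝ → ℝ → EuclideanSpace ℝ (Fin 3))
    (hu : ∀ θ t : ℝ, u θ t = Real.cos θ • T₀ t + Real.sin θ • T₁ t) :
    (∫ t in (0:ℝ)..1, ∫ θ in (0:ℝ)..(Real.pi / 2),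
        (1 / ‖u θ t‖ ^ 3) *
          dot3 (cross3 (deriv (fun θ' => u θ' t) θ) (deriv (fun t' => u θ t') t)) (u θ t)) =
      ∫ t in (0:ℝ)..1,
        dot3 (cross3 (T₀ t) (T₁ t)) (deriv T₀ t + deriv T₁ t) /
          (1 + dot3 (T₀ t) (T₁ t)) := by
  obtain rfl : u = fun θ t => cos θ • T₀ t + sin θ • T₁ t := funext₂ hu
  refine integral_congr fun t ht => ?_
  rw [Set.uIcc_of_le zero_le_one] at ht
  have hderiv_t : ∀ θ, deriv (fun t => cos θ • T₀ t + sin θ • T₁ t) t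
      = cos θ • deriv T₀ t + sin θ • deriv T₁ t := fun θ =>
    ((((hC₀.differentiable one_ne_zero) t).hasDerivAt.const_smul (cos θ)).add
      (((hC₁.differentiable one_ne_zero) t).hasDerivAt.const_smul (sin θ))).deriv
  simp only [(hasDerivAt_cos_smul_add_sin_smul _ _ _).deriv, hderiv_t]
  exact integral_ribbon_fiber (hS₀ t ht) (hS₁ t ht) (hanti t ht) _ _

end
end

section
/- Let C : ℝ → ℝ³ be an embedded (simple) closed polygonal curve of period 1 with corners at t₀ < t₁ < ⋯ < t_n = t₀ + 1 and positive corner angles. Then there exists a sequence of simple closed curves C_i : ℝ → ℝ³ of period 1, each of class C¹ with regular parametrization, converging pointwise to C, such that: (1) C_i(t) = C(t) whenever t lies outside the union of the intervals of radius 1/i around the corner parameters t_j; (2) near each corner t_j, the unit tangent vector of C_i takes values on the shorter great-circle arc in S² joining the incoming edge direction of C at t_j to the outgoing edge direction of C at t_j; and (3) Wr(C_i) → Wr(C) as i → ∞. -/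
noncomputable section

/-- The writhe of a closed curve of period `L`, given by the Gauss double integral. -/
def writhe (L : ℝ) (C : ℝ → EuclideanSpace ℝ (Fin 3)) : ℝ :=
  (1 / (4 * Real.pi)) *
    ∫ s in (0:ℝ)..L, ∫ t in (0:ℝ)..L,
      dot3 (cross3 (deriv C s) (deriv C t)) (C s - C t) / ‖C s - C t‖ ^ 3

/-- The unit tangent vector of a curve. -/
def ut (C : ℝ → EuclideanSpace ℝ (Fin 3)) (t : ℝ) : EuclideanSpace ℝ (Fin 3) :=
  ‖deriv C t‖⁻¹ • deriv C t

/-- The shorter great-circle arc on `S²` joining two non-antipodal unit vectors `u` and `v`: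
the set of normalizations of the nonzero nonnegative combinations of `u` and `v`. -/
def shorterArc (u v : EuclideanSpace ℝ (Fin 3)) : Set (EuclideanSpace ℝ (Fin 3)) :=
  {w | ∃ a b : ℝ, 0 ≤ a ∧ 0 ≤ b ∧ a • u + b • v ≠ 0 ∧
    w = ‖a • u + b • v‖⁻¹ • (a • u + b • v)}


/-!
Near the corner `t j` the polygon is a hinge
`C (t j) + (s - t j) • v (j - 1) + max (s - t j) 0 • (v j - v (j - 1))`, where `v j` is the
velocity along edge `j`. Replacing `max x 0` by the `C¹` profile `δ * φ (x / δ)`, which differs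
from it only on `(-δ, δ)`, gives a `C¹` curve whose velocity `(1 - φ') • v (j - 1) + φ' • v j`
is a nonnegative combination of the two edge directions: it lies on the shorter arc and, the
directions not being antipodal, has a positive component along the bisector. That component
makes the smoothing injective on each corner window; off the corner windows the polygon is
uniformly separated by compactness and the smoothing is `δ`-close to it.

For the writhe, the smoothed curve is planar on each corner window, so the Gauss integrand vanishes
there; elsewhere the two points stay uniformly apart. The integrands are therefore uniformly
bounded, they agree with those of `C` near every pair of non-corner parameters once `δ` is small,
and dominated convergence applies.
-/
open MeasureTheory Set Filter Topology

local notation "ℝ³" => EuclideanSpace ℝ (Fin 3)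

section CrossProduct

lemma dot3_eq (v w : ℝ³) : dot3 v w = v 0 * w 0 + v 1 * w 1 + v 2 * w 2 := by
  simp [dot3, PiLp.inner_apply, Fin.sum_univ_three, mul_comm]

lemma dot3_cross3_smul_add_smul_s5 (p q : ℝ³) (a₁ b₁ a₂ b₂ a₃ b₃ : ℝ) :
    dot3 (cross3 (a₁ • p + b₁ • q) (a₂ • p + b₂ • q)) (a₃ • p + b₃ • q) = 0 := by
  simp only [dot3_eq, cross3, PiLp.add_apply, PiLp.smul_apply, smul_eq_mul,
    Matrix.cons_val_zero, Matrix.cons_val_one, Matrix.cons_val]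
  ring

/-- Lagrange's identity. -/
lemma norm_cross3_sq_add_dot3_sq (v w : ℝ³) :
    ‖cross3 v w‖ ^ 2 + dot3 v w ^ 2 = ‖v‖ ^ 2 * ‖w‖ ^ 2 := by
  simp only [EuclideanSpace.real_norm_sq_eq, Fin.sum_univ_three, dot3_eq, cross3,
    Matrix.cons_val_zero, Matrix.cons_val_one, Matrix.cons_val]
  ring

lemma norm_cross3_le (v w : ℝ³) : ‖cross3 v w‖ ≤ ‖v‖ * ‖w‖ := by
  refine le_of_sq_le_sq ?_ (by positivity)
  nlinarith [norm_cross3_sq_add_dot3_sq v w, sq_nonneg (dot3 v w)]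

lemma abs_dot3_cross3_le (u v w : ℝ³) : |dot3 (cross3 u v) w| ≤ ‖u‖ * ‖v‖ * ‖w‖ :=
  (abs_real_inner_le_norm _ _).trans <|
    mul_le_mul_of_nonneg_right (norm_cross3_le u v) (norm_nonneg w)

lemma continuous_cross3 : Continuous fun p : ℝ³ × ℝ³ => cross3 p.1 p.2 := by
  unfold cross3
  fun_prop

end CrossProduct

section RoundedPosPart

def rampSlope (u : ℝ) : ℝ := max 0 (min 1 ((u + 1) / 2))

/-- A `C¹` rounding of `max x 0`, exact outside `(-1, 1)`. -/
def roundedPosPart (x : ℝ) : ℝ := ∫ u in (-1 : ℝ)..x, rampSlope u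

lemma continuous_rampSlope : Continuous rampSlope := by
  unfold rampSlope
  fun_prop

lemma rampSlope_nonneg (u : ℝ) : 0 ≤ rampSlope u := le_max_left _ _

lemma rampSlope_le_one (u : ℝ) : rampSlope u ≤ 1 := max_le zero_le_one (min_le_left _ _)

lemma rampSlope_of_le {u : ℝ} (h : u ≤ -1) : rampSlope u = 0 :=
  max_eq_left (min_le_of_right_le (by linarith))

lemma rampSlope_of_ge {u : ℝ} (h : 1 ≤ u) : rampSlope u = 1 := by
  rw [rampSlope, min_eq_left (by linarith), max_eq_right zero_le_one]

lemma hasDerivAt_roundedPosPart (x : ℝ) : HasDerivAt roundedPosPart (rampSlope x) x :=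
  (continuous_rampSlope.integral_hasStrictDerivAt (-1) x).hasDerivAt

lemma contDiff_roundedPosPart : ContDiff ℝ 1 roundedPosPart := by
  rw [contDiff_one_iff_deriv]
  refine ⟨fun x => (hasDerivAt_roundedPosPart x).differentiableAt, ?_⟩
  convert continuous_rampSlope using 1
  exact funext fun x => (hasDerivAt_roundedPosPart x).deriv

lemma monotone_roundedPosPart : Monotone roundedPosPart :=
  monotone_of_deriv_nonneg (fun x => (hasDerivAt_roundedPosPart x).differentiableAt)
    fun x => (hasDerivAt_roundedPosPart x).deriv ▸ rampSlope_nonneg x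

lemma roundedPosPart_of_le {x : ℝ} (h : x ≤ -1) : roundedPosPart x = 0 := by
  rw [roundedPosPart, intervalIntegral.integral_congr (g := fun _ => 0),
    intervalIntegral.integral_zero]
  intro u hu
  rw [uIcc_of_ge h] at hu
  exact rampSlope_of_le hu.2

lemma roundedPosPart_of_ge {x : ℝ} (h : 1 ≤ x) : roundedPosPart x = x := by
  have hint := fun a b => continuous_rampSlope.intervalIntegrable (μ := volume) a b
  rw [roundedPosPart, ← intervalIntegral.integral_add_adjacent_intervals (hint (-1) 1) (hint 1 x),
    intervalIntegral.integral_congr (g := fun u => (u + 1) / 2) (a := -1) (b := 1),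
    intervalIntegral.integral_congr (g := fun _ => 1) (a := 1) (b := x)]
  · simp
  · intro u hu
    rw [uIcc_of_le h] at hu
    exact rampSlope_of_ge hu.1
  · intro u hu
    rw [uIcc_of_le (by norm_num)] at hu
    rw [rampSlope, min_eq_right (by linarith [hu.2]), max_eq_right (by linarith [hu.1])]

lemma abs_roundedPosPart_sub_le (x : ℝ) : |roundedPosPart x - max x 0| ≤ 1 := by
  rcases le_or_gt x (-1) with h | h
  · rw [roundedPosPart_of_le h, max_eq_right (by linarith)]
    norm_num
  rcases le_or_gt 1 x with h' | h'
  · rw [roundedPosPart_of_ge h', max_eq_left (by linarith)]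
    norm_num
  have h0 : 0 ≤ roundedPosPart x :=
    roundedPosPart_of_le (le_refl (-1)) ▸ monotone_roundedPosPart h.le
  have h1 : roundedPosPart x ≤ 1 :=
    roundedPosPart_of_ge (le_refl 1) ▸ monotone_roundedPosPart h'.le
  rw [abs_le]
  constructor <;> cases max_cases x 0 <;> linarith

end RoundedPosPart

section Periodic

lemma Function.Periodic.add_int {α : Type*} {f : ℝ → α} (hf : Function.Periodic f 1) (k : ℤ)
    (x : ℝ) : f (x + k) = f x := by
  simpa using hf.int_mul k x

lemma Function.Periodic.sub_int {α : Type*} {f : ℝ → α} (hf : Function.Periodic f 1) (k : ℤ)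
    (x : ℝ) : f (x - k) = f x := by
  simpa using hf.sub_int_mul_eq k (x := x)

lemma exists_int_sub_mem_Ico (a x : ℝ) : ∃ k : ℤ, x - k ∈ Ico a (a + 1) :=
  ⟨⌊x - a⌋, by linarith [Int.floor_le (x - a)], by linarith [Int.lt_floor_add_one (x - a)]⟩

lemma Function.Periodic.exists_int_eq_add_of_injOn {α : Type*} {f : ℝ → α}
    (hf : Function.Periodic f 1) {a : ℝ} (hinj : InjOn f (Ico a (a + 1))) {x y : ℝ}
    (h : f x = f y) : ∃ k : ℤ, y = x + k := by
  obtain ⟨k, hk⟩ := exists_int_sub_mem_Ico a x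
  obtain ⟨l, hl⟩ := exists_int_sub_mem_Ico a y
  have := hinj hk hl (by rwa [hf.sub_int, hf.sub_int])
  exact ⟨l - k, by push_cast; linarith⟩

lemma Function.Periodic.exists_forall_le_int {β : Type*} [LinearOrder β] {f : ℤ → β} {c : ℤ}
    (hf : Function.Periodic f c) (hc : 0 < c) : ∃ j, ∀ k, f j ≤ f k := by
  obtain ⟨j, -, hj⟩ := Set.exists_min_image _ f (Set.finite_Ico 0 c) ⟨0, le_refl 0, hc⟩
  refine ⟨j, fun k => ?_⟩
  obtain ⟨y, hy, hky⟩ := hf.exists_mem_Ico₀ hc k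
  exact hky ▸ hj y hy

lemma Function.Periodic.exists_forall_ge_int {β : Type*} [LinearOrder β] {f : ℤ → β} {c : ℤ}
    (hf : Function.Periodic f c) (hc : 0 < c) : ∃ j, ∀ k, f k ≤ f j := by
  obtain ⟨j, -, hj⟩ := Set.exists_max_image _ f (Set.finite_Ico 0 c) ⟨0, le_refl 0, hc⟩
  refine ⟨j, fun k => ?_⟩
  obtain ⟨y, hy, hky⟩ := hf.exists_mem_Ico₀ hc k
  exact hky ▸ hj y hy

end Periodic

section CornerParameters

variable {t : ℤ → ℝ} {n : ℕ}

lemma add_mul_eq_of_add_period (htper : ∀ j : ℤ, t (j + n) = t j + 1) (j k : ℤ) :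
    t (j + n * k) = t j + k := by
  induction k using Int.induction_on with
  | zero => simp
  | succ k ih => rw [mul_add_one, ← add_assoc, htper, ih]; push_cast; ring
  | pred k ih =>
    have h := htper (j + n * (-k - 1))
    rw [show j + n * (-k - 1) + n = j + n * -k by ring, ih] at h
    push_cast at h ⊢
    linarith

lemma exists_le_lt_of_add_period (ht : StrictMono t) (htper : ∀ j : ℤ, t (j + n) = t j + 1)
    (s : ℝ) : ∃ j, t j ≤ s ∧ s < t (j + 1) := by
  have ht_nk := fun k => by simpa using add_mul_eq_of_add_period htper 0 k
  obtain ⟨j, hj, hmax⟩ := Int.exists_greatest_of_bdd (P := fun j => t j ≤ s)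
    ⟨n * (⌊s - t 0⌋ + 1), fun z hz => by
      by_contra! h
      have := ht h
      rw [ht_nk] at this
      push_cast at this
      linarith [Int.lt_floor_add_one (s - t 0)]⟩
    ⟨n * ⌊s - t 0⌋, by rw [ht_nk]; linarith [Int.floor_le (s - t 0)]⟩
  exact ⟨j, hj, not_le.1 fun h => by linarith [hmax _ h]⟩

lemma exists_pos_le_sub_of_add_period (ht : StrictMono t)
    (htper : ∀ j : ℤ, t (j + n) = t j + 1) (hn : 0 < n) :
    ∃ g > 0, ∀ j, g ≤ t (j + 1) - t j := by
  have hper : Function.Periodic (fun j => t (j + 1) - t j) (n : ℤ) := fun j => by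
    change t (j + n + 1) - t (j + n) = t (j + 1) - t j
    rw [add_right_comm, htper, htper]
    ring
  obtain ⟨j, hj⟩ := hper.exists_forall_le_int (by exact_mod_cast hn)
  exact ⟨_, sub_pos.2 (ht (lt_add_one j)), hj⟩

end CornerParameters

section Polygon

structure IsClosedPolygon (C : ℝ → ℝ³) (n : ℕ) (t : ℤ → ℝ) : Prop where
  periodic : Function.Periodic C 1
  strictMono : StrictMono t
  add_period : ∀ j : ℤ, t (j + n) = t j + 1
  pos : 0 < n
  affine : ∀ j : ℤ, ∀ s ∈ Icc (t j) (t (j + 1)),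
    C s = C (t j) + ((s - t j) / (t (j + 1) - t j)) • (C (t (j + 1)) - C (t j))

def edgeVelocity (C : ℝ → ℝ³) (t : ℤ → ℝ) (j : ℤ) : ℝ³ :=
  (t (j + 1) - t j)⁻¹ • (C (t (j + 1)) - C (t j))

def cornerJump (C : ℝ → ℝ³) (t : ℤ → ℝ) (j : ℤ) : ℝ³ :=
  edgeVelocity C t j - edgeVelocity C t (j - 1)

namespace IsClosedPolygon

variable {C : ℝ → ℝ³} {n : ℕ} {t : ℤ → ℝ}

lemma sub_pos_succ (hC : IsClosedPolygon C n t) (j : ℤ) : 0 < t (j + 1) - t j :=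
  sub_pos.2 (hC.strictMono (lt_add_one j))

lemma eq_add_smul_edgeVelocity (hC : IsClosedPolygon C n t) {j : ℤ} {s : ℝ}
    (hs : s ∈ Icc (t j) (t (j + 1))) : C s = C (t j) + (s - t j) • edgeVelocity C t j := by
  rw [hC.affine j s hs, edgeVelocity, smul_smul, div_eq_mul_inv]

lemma eq_hinge (hC : IsClosedPolygon C n t) {j : ℤ} {x : ℝ}
    (hx : x ∈ Icc (t (j - 1)) (t (j + 1))) :
    C x = C (t j) + (x - t j) • edgeVelocity C t (j - 1) + max (x - t j) 0 • cornerJump C t j := by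
  rcases le_or_gt x (t j) with hle | hgt
  · have hcorner := hC.eq_add_smul_edgeVelocity (j := j - 1) (s := t j)
      ⟨(hC.strictMono (sub_one_lt j)).le, by rw [sub_add_cancel]⟩
    rw [hC.eq_add_smul_edgeVelocity (j := j - 1) (by rw [sub_add_cancel]; exact ⟨hx.1, hle⟩),
      max_eq_right (by linarith), zero_smul, add_zero, hcorner]
    module
  · rw [hC.eq_add_smul_edgeVelocity ⟨hgt.le, hx.2⟩, max_eq_left (by linarith), cornerJump]
    module

protected lemma continuous (hC : IsClosedPolygon C n t) : Continuous C := by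
  refine continuous_iff_continuousAt.2 fun s => ?_
  obtain ⟨j, hj, hj'⟩ := exists_le_lt_of_add_period hC.strictMono hC.add_period s
  have hmem : Ioo (t (j - 1)) (t (j + 1)) ∈ 𝓝 s :=
    Ioo_mem_nhds ((hC.strictMono (sub_one_lt j)).trans_le hj) hj'
  have hhinge : ContinuousAt (fun x => C (t j) + (x - t j) • edgeVelocity C t (j - 1) +
      max (x - t j) 0 • cornerJump C t j) s := by fun_prop
  exact hhinge.congr
    (eventually_of_mem hmem fun x hx => (hC.eq_hinge (Ioo_subset_Icc_self hx)).symm)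

lemma edgeVelocity_add_period (hC : IsClosedPolygon C n t) (j : ℤ) :
    edgeVelocity C t (j + n) = edgeVelocity C t j := by
  simp only [edgeVelocity, add_right_comm j (n : ℤ) 1, hC.add_period, hC.periodic _,
    add_sub_add_right_eq_sub]

lemma cornerJump_add_period (hC : IsClosedPolygon C n t) (j : ℤ) :
    cornerJump C t (j + n) = cornerJump C t j := by
  rw [cornerJump, cornerJump, add_sub_right_comm j (n : ℤ) 1, hC.edgeVelocity_add_period,
    hC.edgeVelocity_add_period]

lemma exists_norm_edgeVelocity_le (hC : IsClosedPolygon C n t) :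
    ∃ L, ∀ j, ‖edgeVelocity C t j‖ ≤ L := by
  have hper : Function.Periodic (fun j => ‖edgeVelocity C t j‖) (n : ℤ) := fun j => by
    simp only [hC.edgeVelocity_add_period]
  obtain ⟨j, hj⟩ := hper.exists_forall_ge_int (by exact_mod_cast hC.pos)
  exact ⟨_, hj⟩

lemma exists_norm_cornerJump_le (hC : IsClosedPolygon C n t) :
    ∃ W, ∀ j, ‖cornerJump C t j‖ ≤ W := by
  obtain ⟨L, hL⟩ := hC.exists_norm_edgeVelocity_le
  exact ⟨L + L, fun j => (norm_sub_le _ _).trans (add_le_add (hL j) (hL (j - 1)))⟩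

/-- Otherwise `C` would be constant on an interval. -/
lemma edgeVelocity_ne_zero (hC : IsClosedPolygon C n t) {a : ℝ} (hinj : InjOn C (Ico a (a + 1)))
    (j : ℤ) : edgeVelocity C t j ≠ 0 := by
  intro h0
  set ε := min (t (j + 1) - t j) (1 / 2)
  have hε : 0 < ε := lt_min (hC.sub_pos_succ j) (by norm_num)
  have hconst : C (t j) = C (t j + ε) := by
    rw [hC.eq_add_smul_edgeVelocity (s := t j + ε)
      ⟨by linarith, by linarith [min_le_left (t (j + 1) - t j) (1 / 2)]⟩, h0, smul_zero, add_zero]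
  obtain ⟨k, hk⟩ := hC.periodic.exists_int_eq_add_of_injOn hinj hconst
  have hk0 : (0 : ℤ) < k := by exact_mod_cast (show (0 : ℝ) < k by linarith)
  have hk1 : k < 1 := by
    exact_mod_cast (show (k : ℝ) < 1 by linarith [min_le_right (t (j + 1) - t j) (1 / 2)])
  omega

lemma edgeVelocity_eq_norm_smul (hC : IsClosedPolygon C n t) {j : ℤ} {u : ℝ³}
    (hdir : C (t (j + 1)) - C (t j) = ‖C (t (j + 1)) - C (t j)‖ • u) :
    edgeVelocity C t j = ‖edgeVelocity C t j‖ • u := by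
  rw [edgeVelocity, norm_smul, norm_inv, Real.norm_of_nonneg (hC.sub_pos_succ j).le, mul_smul,
    ← hdir]

end IsClosedPolygon

end Polygon

section Smoothing

def cornerCorrection (δ x : ℝ) : ℝ := δ * roundedPosPart (x / δ) - max x 0

lemma cornerCorrection_eq_zero {δ x : ℝ} (hδ : 0 < δ) (h : δ ≤ |x|) : cornerCorrection δ x = 0 := by
  rcases le_or_gt x 0 with hx | hx
  · rw [abs_of_nonpos hx] at h
    rw [cornerCorrection, roundedPosPart_of_le ((div_le_iff₀ hδ).2 (by linarith)), mul_zero,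
      max_eq_right hx, sub_self]
  · rw [abs_of_pos hx] at h
    rw [cornerCorrection, roundedPosPart_of_ge ((le_div_iff₀ hδ).2 (by linarith)),
      mul_div_cancel₀ _ hδ.ne', max_eq_left hx.le, sub_self]

lemma abs_cornerCorrection_le {δ : ℝ} (hδ : 0 < δ) (x : ℝ) : |cornerCorrection δ x| ≤ δ := by
  have h : cornerCorrection δ x = δ * (roundedPosPart (x / δ) - max (x / δ) 0) := by
    rw [cornerCorrection, mul_sub, mul_max_of_nonneg _ _ hδ.le, mul_div_cancel₀ _ hδ.ne', mul_zero]
  rw [h, abs_mul, abs_of_pos hδ]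
  exact mul_le_of_le_one_right hδ.le (abs_roundedPosPart_sub_le _)

/-- Each kink `max (s - t j) 0 • cornerJump C t j` of `C` is replaced by its rounding at
scale `δ`. -/
def smoothing (C : ℝ → ℝ³) (t : ℤ → ℝ) (δ s : ℝ) : ℝ³ :=
  C s + ∑' j : ℤ, cornerCorrection δ (s - t j) • cornerJump C t j

def cornerWindow (t : ℤ → ℝ) (δ : ℝ) (j : ℤ) : Set ℝ := Ioo (t (j - 1) + δ) (t (j + 1) - δ)

def cornerModel (C : ℝ → ℝ³) (t : ℤ → ℝ) (δ : ℝ) (j : ℤ) (x : ℝ) : ℝ³ :=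
  C (t j) + (x - t j) • edgeVelocity C t (j - 1) +
    (δ * roundedPosPart ((x - t j) / δ)) • cornerJump C t j

variable {C : ℝ → ℝ³} {n : ℕ} {t : ℤ → ℝ} {δ : ℝ}

lemma smoothing_eq_self {s : ℝ} (hδ : 0 < δ) (h : ∀ j, δ ≤ |s - t j|) :
    smoothing C t δ s = C s := by
  simp [smoothing, cornerCorrection_eq_zero hδ (h _)]

lemma smoothing_eq_self_of_mem_Ioo (ht : StrictMono t) (hδ : 0 < δ) {j : ℤ} {s : ℝ}
    (hs : s ∈ Ioo (t j + δ) (t (j + 1) - δ)) : smoothing C t δ s = C s := by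
  refine smoothing_eq_self hδ fun k => ?_
  rcases le_or_gt k j with hk | hk
  · rw [abs_of_pos (by linarith [ht.monotone hk, hs.1])]
    linarith [ht.monotone hk, hs.1]
  · rw [abs_of_neg (by linarith [ht.monotone (Int.add_one_le_of_lt hk), hs.2])]
    linarith [ht.monotone (Int.add_one_le_of_lt hk), hs.2]

lemma smoothing_eq_of_mem_cornerWindow (ht : StrictMono t) (hδ : 0 < δ) {j : ℤ} {s : ℝ}
    (hs : s ∈ cornerWindow t δ j) :
    smoothing C t δ s = C s + cornerCorrection δ (s - t j) • cornerJump C t j := by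
  rw [smoothing, tsum_eq_single j fun k hk => ?_]
  rw [cornerCorrection_eq_zero hδ, zero_smul]
  rcases hk.lt_or_gt with hk | hk
  · rw [abs_of_pos (by linarith [ht.monotone (Int.le_sub_one_of_lt hk), hs.1])]
    linarith [ht.monotone (Int.le_sub_one_of_lt hk), hs.1]
  · rw [abs_of_neg (by linarith [ht.monotone (Int.add_one_le_of_lt hk), hs.2])]
    linarith [ht.monotone (Int.add_one_le_of_lt hk), hs.2]

lemma norm_smoothing_sub_le (ht : StrictMono t) (hδ : 0 < δ)
    (hcov : ∀ s, ∃ j, s ∈ cornerWindow t δ j) {W : ℝ} (hW : ∀ j, ‖cornerJump C t j‖ ≤ W)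
    (s : ℝ) : ‖smoothing C t δ s - C s‖ ≤ δ * W := by
  obtain ⟨j, hj⟩ := hcov s
  rw [smoothing_eq_of_mem_cornerWindow ht hδ hj, add_sub_cancel_left, norm_smul, Real.norm_eq_abs]
  exact mul_le_mul (abs_cornerCorrection_le hδ _) (hW j) (norm_nonneg _) hδ.le

lemma hasDerivAt_cornerModel (hδ : δ ≠ 0) (j : ℤ) (x : ℝ) :
    HasDerivAt (cornerModel C t δ j)
      ((1 - rampSlope ((x - t j) / δ)) • edgeVelocity C t (j - 1) +
        rampSlope ((x - t j) / δ) • edgeVelocity C t j) x := by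
  have hlin : HasDerivAt (fun y => (y - t j) / δ) (1 / δ) x :=
    ((hasDerivAt_id x).sub_const (t j)).div_const δ
  have h := ((((hasDerivAt_id x).sub_const (t j)).smul_const (edgeVelocity C t (j - 1))).const_add
    (C (t j))).add
    ((((hasDerivAt_roundedPosPart _).comp x hlin).const_mul δ).smul_const (cornerJump C t j))
  rw [show δ * (rampSlope ((x - t j) / δ) * (1 / δ)) = rampSlope ((x - t j) / δ) by field_simp,
    cornerJump] at h
  exact h.congr_deriv (by module)

lemma contDiff_cornerModel (j : ℤ) : ContDiff ℝ 1 (cornerModel C t δ j) := by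
  have := contDiff_roundedPosPart
  unfold cornerModel
  fun_prop

namespace IsClosedPolygon

lemma smoothing_eq_cornerModel (hC : IsClosedPolygon C n t) (hδ : 0 < δ) {j : ℤ} {s : ℝ}
    (hs : s ∈ cornerWindow t δ j) : smoothing C t δ s = cornerModel C t δ j s := by
  rw [smoothing_eq_of_mem_cornerWindow hC.strictMono hδ hs,
    hC.eq_hinge ⟨by linarith [hs.1], by linarith [hs.2]⟩, cornerModel, cornerCorrection]
  module

lemma smoothing_eventuallyEq_cornerModel (hC : IsClosedPolygon C n t) (hδ : 0 < δ) {j : ℤ}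
    {s : ℝ} (hs : s ∈ cornerWindow t δ j) : smoothing C t δ =ᶠ[𝓝 s] cornerModel C t δ j :=
  eventually_of_mem (isOpen_Ioo.mem_nhds hs) fun _ hx => hC.smoothing_eq_cornerModel hδ hx

lemma hasDerivAt_smoothing (hC : IsClosedPolygon C n t) (hδ : 0 < δ) {j : ℤ} {s : ℝ}
    (hs : s ∈ cornerWindow t δ j) :
    HasDerivAt (smoothing C t δ)
      ((1 - rampSlope ((s - t j) / δ)) • edgeVelocity C t (j - 1) +
        rampSlope ((s - t j) / δ) • edgeVelocity C t j) s :=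
  (hasDerivAt_cornerModel hδ.ne' j s).congr_of_eventuallyEq
    (hC.smoothing_eventuallyEq_cornerModel hδ hs)

lemma contDiff_smoothing (hC : IsClosedPolygon C n t) (hδ : 0 < δ)
    (hcov : ∀ s, ∃ j, s ∈ cornerWindow t δ j) : ContDiff ℝ 1 (smoothing C t δ) := by
  refine contDiff_iff_contDiffAt.2 fun s => ?_
  obtain ⟨j, hj⟩ := hcov s
  exact contDiff_cornerModel j |>.contDiffAt.congr_of_eventuallyEq
    (hC.smoothing_eventuallyEq_cornerModel hδ hj)

lemma norm_deriv_smoothing_le (hC : IsClosedPolygon C n t) (hδ : 0 < δ)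
    (hcov : ∀ s, ∃ j, s ∈ cornerWindow t δ j) {L : ℝ} (hL : ∀ j, ‖edgeVelocity C t j‖ ≤ L)
    (s : ℝ) : ‖deriv (smoothing C t δ) s‖ ≤ L := by
  obtain ⟨j, hj⟩ := hcov s
  set r := rampSlope ((s - t j) / δ)
  have hr0 := rampSlope_nonneg ((s - t j) / δ)
  have hr1 := rampSlope_le_one ((s - t j) / δ)
  rw [(hC.hasDerivAt_smoothing hδ hj).deriv]
  calc ‖(1 - r) • edgeVelocity C t (j - 1) + r • edgeVelocity C t j‖
      ≤ (1 - r) * L + r * L := by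
        refine (norm_add_le _ _).trans (add_le_add ?_ ?_) <;>
          rw [norm_smul, Real.norm_of_nonneg (by linarith)] <;> gcongr
        exacts [hL _, hL _]
    _ = L := by ring

lemma smoothing_periodic (hC : IsClosedPolygon C n t) (δ : ℝ) :
    Function.Periodic (smoothing C t δ) 1 := by
  intro s
  rw [smoothing, smoothing, hC.periodic s, ← (Equiv.addRight (n : ℤ)).tsum_eq]
  simp only [Equiv.coe_addRight, hC.add_period, hC.cornerJump_add_period, add_sub_add_right_eq_sub]

lemma eventually_cornerWindow (hC : IsClosedPolygon C n t) :
    ∀ᶠ δ in 𝓝[>] (0 : ℝ), (∀ s, ∃ j, s ∈ cornerWindow t δ j) ∧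
      ∀ j s, |s - t j| < δ → s ∈ cornerWindow t δ j := by
  obtain ⟨g, hg, hgap⟩ := exists_pos_le_sub_of_add_period hC.strictMono hC.add_period hC.pos
  have hgap' : ∀ j, g ≤ t j - t (j - 1) := fun j => by simpa using hgap (j - 1)
  filter_upwards [Ioo_mem_nhdsGT (half_pos hg)] with δ hδ
  refine ⟨fun s => ?_, fun j s hs => ?_⟩
  · obtain ⟨j, hj, hj'⟩ := exists_le_lt_of_add_period hC.strictMono hC.add_period s
    rcases lt_or_ge s (t (j + 1) - δ) with hs | hs
    · exact ⟨j, by linarith [hgap' j, hδ.2], hs⟩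
    · refine ⟨j + 1, by rw [add_sub_cancel_right]; linarith [hgap j, hδ.2], ?_⟩
      linarith [hgap (j + 1), hδ.2]
  · rw [abs_lt] at hs
    exact ⟨by linarith [hgap' j, hδ.2], by linarith [hgap j, hδ.2]⟩

lemma tendsto_smoothing (hC : IsClosedPolygon C n t) (s : ℝ) :
    Tendsto (fun δ => smoothing C t δ s) (𝓝[>] 0) (𝓝 (C s)) := by
  obtain ⟨W, hW⟩ := hC.exists_norm_cornerJump_le
  rw [tendsto_iff_norm_sub_tendsto_zero]
  refine squeeze_zero' (Eventually.of_forall fun _ => norm_nonneg _) ?_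
    (by simpa using ((tendsto_nhdsWithin_of_tendsto_nhds tendsto_id).mul_const W :
      Tendsto (fun δ : ℝ => δ * W) (𝓝[>] 0) (𝓝 (0 * W))))
  filter_upwards [hC.eventually_cornerWindow, self_mem_nhdsWithin] with δ hcov hδ
  exact norm_smoothing_sub_le hC.strictMono hδ hcov.1 hW s

end IsClosedPolygon

end Smoothing

section Tangent

open scoped InnerProductSpace

lemma inner_smul_add_smul_add_pos {F : Type*} [NormedAddCommGroup F] [InnerProductSpace ℝ F]
    {u v : F} (hu : ‖u‖ = 1) (hv : ‖v‖ = 1) (huv : u ≠ -v) {a b : ℝ} (hab : 0 < a + b) :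
    0 < ⟪a • u + b • v, u + v⟫_ℝ := by
  have hsum : 0 < ‖u + v‖ ^ 2 :=
    pow_pos (norm_pos_iff.2 fun h => huv (eq_neg_of_add_eq_zero_left h)) 2
  rw [norm_add_sq_real, hu, hv] at hsum
  have h : ⟪a • u + b • v, u + v⟫_ℝ = (a + b) * (1 + ⟪u, v⟫_ℝ) := by
    simp only [inner_add_left, inner_add_right, real_inner_smul_left, real_inner_self_eq_norm_sq,
      hu, hv, real_inner_comm u v]
    ring
  rw [h]
  exact mul_pos hab (by linarith)

namespace IsClosedPolygon

variable {C : ℝ → ℝ³} {n : ℕ} {t : ℤ → ℝ} {e : ℤ → ℝ³} {a δ : ℝ}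

lemma exists_hasDerivAt_smoothing (hC : IsClosedPolygon C n t) (hinj : InjOn C (Ico a (a + 1)))
    (hdir : ∀ j, C (t (j + 1)) - C (t j) = ‖C (t (j + 1)) - C (t j)‖ • e j) (hδ : 0 < δ)
    {j : ℤ} {s : ℝ} (hs : s ∈ cornerWindow t δ j) :
    ∃ α β : ℝ, 0 ≤ α ∧ 0 ≤ β ∧ 0 < α + β ∧
      HasDerivAt (smoothing C t δ) (α • e (j - 1) + β • e j) s := by
  set r := rampSlope ((s - t j) / δ)
  have hr0 : 0 ≤ r := rampSlope_nonneg _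
  have hr1 : r ≤ 1 := rampSlope_le_one _
  have hv₀ := norm_pos_iff.2 (hC.edgeVelocity_ne_zero hinj (j - 1))
  have hv₁ := norm_pos_iff.2 (hC.edgeVelocity_ne_zero hinj j)
  refine ⟨(1 - r) * ‖edgeVelocity C t (j - 1)‖, r * ‖edgeVelocity C t j‖, by positivity,
    by positivity, ?_, ?_⟩
  · nlinarith [min_le_left ‖edgeVelocity C t (j - 1)‖ ‖edgeVelocity C t j‖,
      min_le_right ‖edgeVelocity C t (j - 1)‖ ‖edgeVelocity C t j‖, lt_min hv₀ hv₁]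
  · have h := hC.hasDerivAt_smoothing hδ hs
    rwa [hC.edgeVelocity_eq_norm_smul (hdir (j - 1)), hC.edgeVelocity_eq_norm_smul (hdir j),
      smul_smul, smul_smul] at h

lemma inner_deriv_smoothing_pos (hC : IsClosedPolygon C n t) (hinj : InjOn C (Ico a (a + 1)))
    (hdir : ∀ j, C (t (j + 1)) - C (t j) = ‖C (t (j + 1)) - C (t j)‖ • e j)
    (heunit : ∀ j, ‖e j‖ = 1) (hanti : ∀ j, e (j - 1) ≠ -e j) (hδ : 0 < δ) {j : ℤ} {s : ℝ}
    (hs : s ∈ cornerWindow t δ j) : 0 < ⟪deriv (smoothing C t δ) s, e (j - 1) + e j⟫_ℝ := by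
  obtain ⟨α, β, -, -, hαβ, hderiv⟩ := hC.exists_hasDerivAt_smoothing hinj hdir hδ hs
  rw [hderiv.deriv]
  exact inner_smul_add_smul_add_pos (heunit _) (heunit _) (hanti j) hαβ

lemma deriv_smoothing_ne_zero (hC : IsClosedPolygon C n t) (hinj : InjOn C (Ico a (a + 1)))
    (hdir : ∀ j, C (t (j + 1)) - C (t j) = ‖C (t (j + 1)) - C (t j)‖ • e j)
    (heunit : ∀ j, ‖e j‖ = 1) (hanti : ∀ j, e (j - 1) ≠ -e j) (hδ : 0 < δ) {j : ℤ} {s : ℝ}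
    (hs : s ∈ cornerWindow t δ j) : deriv (smoothing C t δ) s ≠ 0 := fun h0 => by
  simpa [h0] using hC.inner_deriv_smoothing_pos hinj hdir heunit hanti hδ hs

lemma ut_smoothing_mem_shorterArc (hC : IsClosedPolygon C n t) (hinj : InjOn C (Ico a (a + 1)))
    (hdir : ∀ j, C (t (j + 1)) - C (t j) = ‖C (t (j + 1)) - C (t j)‖ • e j)
    (heunit : ∀ j, ‖e j‖ = 1) (hanti : ∀ j, e (j - 1) ≠ -e j) (hδ : 0 < δ) {j : ℤ} {s : ℝ}
    (hs : s ∈ cornerWindow t δ j) : ut (smoothing C t δ) s ∈ shorterArc (e (j - 1)) (e j) := by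
  obtain ⟨α, β, hα, hβ, -, hderiv⟩ := hC.exists_hasDerivAt_smoothing hinj hdir hδ hs
  refine ⟨α, β, hα, hβ, ?_, by rw [ut, hderiv.deriv]⟩
  rw [← hderiv.deriv]
  exact hC.deriv_smoothing_ne_zero hinj hdir heunit hanti hδ hs

/-- On a corner window the smoothing moves strictly forward along the bisector `e (j - 1) + e j`. -/
lemma injOn_smoothing_cornerWindow (hC : IsClosedPolygon C n t)
    (hinj : InjOn C (Ico a (a + 1)))
    (hdir : ∀ j, C (t (j + 1)) - C (t j) = ‖C (t (j + 1)) - C (t j)‖ • e j)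
    (heunit : ∀ j, ‖e j‖ = 1) (hanti : ∀ j, e (j - 1) ≠ -e j) (hδ : 0 < δ) (j : ℤ) :
    InjOn (smoothing C t δ) (cornerWindow t δ j) := by
  have hderiv := fun x (hx : x ∈ cornerWindow t δ j) =>
    (hC.hasDerivAt_smoothing hδ hx).differentiableAt.hasDerivAt.inner ℝ
      (hasDerivAt_const x (e (j - 1) + e j))
  have hmono : StrictMonoOn (fun x => ⟪smoothing C t δ x, e (j - 1) + e j⟫_ℝ)
      (cornerWindow t δ j) := by
    refine strictMonoOn_of_deriv_pos (convex_Ioo _ _)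
      (fun x hx => (hderiv x hx).continuousAt.continuousWithinAt) fun x hx => ?_
    rw [interior_Ioo] at hx
    rw [(hderiv x hx).deriv, inner_zero_right, zero_add]
    exact hC.inner_deriv_smoothing_pos hinj hdir heunit hanti hδ hx
  exact InjOn.of_comp (g := fun v => ⟪v, e (j - 1) + e j⟫_ℝ) hmono.injOn

end IsClosedPolygon

end Tangent

section Separation

lemma eq_of_add_int_eq_add_int {a s u : ℝ} (hs : s ∈ Ico a (a + 1)) (hu : u ∈ Ico a (a + 1))
    {k l : ℤ} (h : s + k = u + l) : s = u := by
  have hkl : ((k - l : ℤ) : ℝ) = u - s := by push_cast; linarith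
  have h1 : -1 < k - l := by exact_mod_cast (show (-1 : ℝ) < ((k - l : ℤ) : ℝ) by
    rw [hkl]; linarith [hs.2, hu.1])
  have h2 : k - l < 1 := by exact_mod_cast (show ((k - l : ℤ) : ℝ) < 1 by
    rw [hkl]; linarith [hs.1, hu.2])
  have : k = l := by omega
  subst this
  linarith

lemma exists_pos_le_norm_sub_of_periodic {E : Type*} [NormedAddCommGroup E] {f : ℝ → E}
    (hf : Continuous f) (hper : Function.Periodic f 1) {a : ℝ} (hinj : InjOn f (Ico a (a + 1)))
    {N : Set (ℝ × ℝ)} (hN : IsOpen N) (hdiag : ∀ (s : ℝ) (k : ℤ), (s, s + k) ∈ N)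
    (hshift : ∀ (s u : ℝ) (k l : ℤ), (s + k, u + l) ∈ N → (s, u) ∈ N) :
    ∃ m > 0, ∀ p ∉ N, m ≤ ‖f p.1 - f p.2‖ := by
  obtain ⟨m, hm, hmK⟩ := ((isCompact_Icc.prod isCompact_Icc).diff hN).exists_forall_le'
    (a := 0) (f := fun p : ℝ × ℝ => ‖f p.1 - f p.2‖)
    (by fun_prop : Continuous fun p : ℝ × ℝ => ‖f p.1 - f p.2‖).continuousOn fun p hp => by
      refine norm_pos_iff.2 (sub_ne_zero.2 fun h => hp.2 ?_)
      obtain ⟨k, hk⟩ := hper.exists_int_eq_add_of_injOn hinj h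
      rw [← Prod.mk.eta (p := p), hk]
      exact hdiag _ _
  refine ⟨m, hm, fun p hp => ?_⟩
  obtain ⟨k, hk⟩ := exists_int_sub_mem_Ico a p.1
  obtain ⟨l, hl⟩ := exists_int_sub_mem_Ico a p.2
  have := hmK (p.1 - k, p.2 - l) ⟨⟨Ico_subset_Icc_self hk, Ico_subset_Icc_self hl⟩,
    fun h => hp (hshift p.1 p.2 (-k) (-l) (by push_cast; simpa only [← sub_eq_add_neg] using h))⟩
  simpa only [hper.sub_int] using this

def nearCornerPairs (t : ℤ → ℝ) (δ : ℝ) : Set (ℝ × ℝ) :=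
  {p | ∃ j k l : ℤ, p.1 + k ∈ cornerWindow t δ j ∧ p.2 + l ∈ cornerWindow t δ j}

variable {C : ℝ → ℝ³} {n : ℕ} {t : ℤ → ℝ} {e : ℤ → ℝ³} {a δ : ℝ}

lemma isOpen_nearCornerPairs : IsOpen (nearCornerPairs t δ) := by
  simp only [nearCornerPairs, ofPred_exists]
  exact isOpen_iUnion fun j => isOpen_iUnion fun k => isOpen_iUnion fun l =>
    (isOpen_Ioo.preimage (by fun_prop)).inter (isOpen_Ioo.preimage (by fun_prop))

lemma nearCornerPairs_anti {δ δ' : ℝ} (h : δ ≤ δ') :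
    nearCornerPairs t δ' ⊆ nearCornerPairs t δ := by
  rintro p ⟨j, k, l, hk, hl⟩
  exact ⟨j, k, l, ⟨by linarith [hk.1], by linarith [hk.2]⟩,
    ⟨by linarith [hl.1], by linarith [hl.2]⟩⟩

namespace IsClosedPolygon

lemma exists_pos_le_norm_sub (hC : IsClosedPolygon C n t) (hinj : InjOn C (Ico a (a + 1))) :
    ∃ m > 0, ∀ᶠ δ in 𝓝[>] 0, ∀ p ∉ nearCornerPairs t δ, m ≤ ‖C p.1 - C p.2‖ := by
  obtain ⟨δ₀, ⟨hcov, -⟩, hδ₀⟩ := (hC.eventually_cornerWindow.and self_mem_nhdsWithin).exists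
  obtain ⟨m, hm, hsep⟩ := exists_pos_le_norm_sub_of_periodic hC.continuous hC.periodic hinj
    isOpen_nearCornerPairs
    (fun s k => let ⟨j, hj⟩ := hcov s; ⟨j, 0, -k, by simpa using hj, by simpa using hj⟩)
    (fun s u k l hkl => by
      obtain ⟨j, k', l', hk, hl⟩ := hkl
      exact ⟨j, k + k', l + l', by push_cast; rwa [← add_assoc], by push_cast; rwa [← add_assoc]⟩)
  refine ⟨m, hm, ?_⟩
  filter_upwards [Ioc_mem_nhdsGT hδ₀] with δ hδ p hp
  exact hsep p fun h => hp (nearCornerPairs_anti hδ.2 h)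

lemma exists_pos_le_norm_smoothing_sub (hC : IsClosedPolygon C n t)
    (hinj : InjOn C (Ico a (a + 1))) :
    ∃ m > 0, ∀ᶠ δ in 𝓝[>] 0, ∀ p ∉ nearCornerPairs t δ,
      m ≤ ‖smoothing C t δ p.1 - smoothing C t δ p.2‖ := by
  obtain ⟨m, hm, hsep⟩ := hC.exists_pos_le_norm_sub hinj
  obtain ⟨W, hW⟩ := hC.exists_norm_cornerJump_le
  have hsmall : ∀ᶠ δ in 𝓝[>] (0 : ℝ), δ * W ≤ m / 4 :=
    ((tendsto_nhdsWithin_of_tendsto_nhds tendsto_id).mul_const W :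
      Tendsto (fun δ : ℝ => δ * W) (𝓝[>] 0) (𝓝 (0 * W))).eventually
      (ge_mem_nhds (by rw [zero_mul]; positivity))
  refine ⟨m / 2, half_pos hm, ?_⟩
  filter_upwards [hsep, hC.eventually_cornerWindow, hsmall, self_mem_nhdsWithin]
    with δ hsep hcov hsmall hδ p hp
  have h₁ := norm_smoothing_sub_le hC.strictMono hδ hcov.1 hW p.1
  have h₂ := norm_smoothing_sub_le hC.strictMono hδ hcov.1 hW p.2
  have htri := dist_triangle4 (C p.1) (smoothing C t δ p.1) (smoothing C t δ p.2) (C p.2)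
  rw [dist_eq_norm, dist_eq_norm, dist_eq_norm, dist_eq_norm,
    norm_sub_rev (C p.1) (smoothing C t δ p.1)] at htri
  linarith [hsep p hp]

lemma eventually_injOn_smoothing (hC : IsClosedPolygon C n t) (hinj : InjOn C (Ico a (a + 1)))
    (hdir : ∀ j, C (t (j + 1)) - C (t j) = ‖C (t (j + 1)) - C (t j)‖ • e j)
    (heunit : ∀ j, ‖e j‖ = 1) (hanti : ∀ j, e (j - 1) ≠ -e j) :
    ∀ᶠ δ in 𝓝[>] 0, InjOn (smoothing C t δ) (Ico a (a + 1)) := by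
  obtain ⟨m, hm, hfar⟩ := hC.exists_pos_le_norm_smoothing_sub hinj
  filter_upwards [hfar, self_mem_nhdsWithin] with δ hfar hδ s hs u hu hsu
  by_cases hnear : (s, u) ∈ nearCornerPairs t δ
  · obtain ⟨j, k, l, hk, hl⟩ := hnear
    have hper := hC.smoothing_periodic δ
    refine eq_of_add_int_eq_add_int hs hu
      (hC.injOn_smoothing_cornerWindow hinj hdir heunit hanti hδ j hk hl ?_)
    rw [hper.add_int, hper.add_int, hsu]
  · have := hfar _ hnear
    rw [hsu, sub_self, norm_zero] at this
    exact absurd this (not_le.2 hm)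

end IsClosedPolygon

end Separation

section Writhe

def gaussIntegrand (f : ℝ → ℝ³) (s u : ℝ) : ℝ :=
  dot3 (cross3 (deriv f s) (deriv f u)) (f s - f u) / ‖f s - f u‖ ^ 3

lemma writhe_eq_gaussIntegrand (L : ℝ) (f : ℝ → ℝ³) :
    writhe L f = 1 / (4 * Real.pi) * ∫ s in (0 : ℝ)..L, ∫ u in (0 : ℝ)..L, gaussIntegrand f s u :=
  rfl

lemma measurable_gaussIntegrand {f : ℝ → ℝ³} (hf : Measurable f) :
    Measurable (Function.uncurry (gaussIntegrand f)) := by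
  have hd := measurable_deriv f
  have hcross := continuous_cross3.measurable.comp
    ((hd.comp measurable_fst).prodMk (hd.comp measurable_snd))
  have hdiff : Measurable fun p : ℝ × ℝ => f p.1 - f p.2 :=
    (hf.comp measurable_fst).sub (hf.comp measurable_snd)
  exact (continuous_inner.measurable.comp (hcross.prodMk hdiff)).div (hdiff.norm.pow_const 3)

lemma gaussIntegrand_congr {f g : ℝ → ℝ³} {s u : ℝ} (hs : f =ᶠ[𝓝 s] g) (hu : f =ᶠ[𝓝 u] g) :
    gaussIntegrand f s u = gaussIntegrand g s u := by
  rw [gaussIntegrand, gaussIntegrand, hs.deriv_eq, hu.deriv_eq, hs.eq_of_nhds, hu.eq_of_nhds]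

lemma Function.Periodic.gaussIntegrand_add_int {f : ℝ → ℝ³} (hf : Function.Periodic f 1)
    (s u : ℝ) (k l : ℤ) : gaussIntegrand f (s + k) (u + l) = gaussIntegrand f s u := by
  have hderiv : ∀ (x : ℝ) (k : ℤ), deriv f (x + k) = deriv f x := fun x k => by
    rw [← deriv_comp_add_const, funext fun y => hf.add_int k y]
  rw [gaussIntegrand, gaussIntegrand, hderiv, hderiv, hf.add_int, hf.add_int]

lemma abs_gaussIntegrand_le {f : ℝ → ℝ³} {L m : ℝ} (hL : ∀ s, ‖deriv f s‖ ≤ L) (hm : 0 < m)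
    {s u : ℝ} (h : m ≤ ‖f s - f u‖) : |gaussIntegrand f s u| ≤ L ^ 2 / m ^ 2 := by
  set d := ‖f s - f u‖
  have hd : 0 < d := hm.trans_le h
  have hL0 : 0 ≤ L := (norm_nonneg _).trans (hL s)
  have hnum : |dot3 (cross3 (deriv f s) (deriv f u)) (f s - f u)| ≤ L ^ 2 * d :=
    (abs_dot3_cross3_le _ _ _).trans <| by
      rw [sq]; gcongr <;> exact hL _
  rw [gaussIntegrand, abs_div, abs_of_pos (pow_pos hd 3), div_le_div_iff₀ (pow_pos hd 3)
    (pow_pos hm 2)]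
  calc _ ≤ L ^ 2 * d * d ^ 2 := mul_le_mul hnum (pow_le_pow_left₀ hm.le h 2) (by positivity)
        (by positivity)
    _ = L ^ 2 * d ^ 3 := by ring

lemma tendsto_intervalIntegral_intervalIntegral_of_dominated {ι : Type*} {l : Filter ι}
    [l.IsCountablyGenerated] {F : ι → ℝ → ℝ → ℝ} {f : ℝ → ℝ → ℝ} {a b K : ℝ}
    (hF : ∀ᶠ i in l, Measurable (Function.uncurry (F i)))
    (hK : ∀ᶠ i in l, ∀ s u, |F i s u| ≤ K)
    (hlim : ∀ᵐ s, ∀ᵐ u, Tendsto (fun i => F i s u) l (𝓝 (f s u))) :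
    Tendsto (fun i => ∫ s in a..b, ∫ u in a..b, F i s u) l
      (𝓝 (∫ s in a..b, ∫ u in a..b, f s u)) := by
  refine intervalIntegral.tendsto_integral_filter_of_dominated_convergence (fun _ => K * |b - a|)
    ?_ ?_ intervalIntegrable_const ?_
  · filter_upwards [hF] with i hi
    simp_rw [intervalIntegral.intervalIntegral_eq_integral_uIoc]
    exact ((hi.stronglyMeasurable.integral_prod_right (ν := volume.restrict (uIoc a b))).const_smul
      (if a ≤ b then (1 : ℝ) else -1)).aestronglyMeasurable
  · filter_upwards [hK] with i hi
    exact Eventually.of_forall fun s _ =>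
      intervalIntegral.norm_integral_le_of_norm_le_const fun u _ => hi s u
  · filter_upwards [hlim] with s hs _
    exact intervalIntegral.tendsto_integral_filter_of_dominated_convergence (fun _ => K)
      (hF.mono fun i hi => hi.of_uncurry_left.aestronglyMeasurable)
      (hK.mono fun i hi => Eventually.of_forall fun u _ => hi s u) intervalIntegrable_const
      (hs.mono fun u hu _ => hu)

variable {C : ℝ → ℝ³} {n : ℕ} {t : ℤ → ℝ} {a δ : ℝ}

namespace IsClosedPolygon

/-- On a corner window the smoothing is planar, so the triple product vanishes. -/
lemma gaussIntegrand_smoothing_eq_zero (hC : IsClosedPolygon C n t) (hδ : 0 < δ) {j : ℤ}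
    {s u : ℝ} (hs : s ∈ cornerWindow t δ j) (hu : u ∈ cornerWindow t δ j) :
    gaussIntegrand (smoothing C t δ) s u = 0 := by
  set φ := fun x => δ * roundedPosPart ((x - t j) / δ)
  have hdiff : cornerModel C t δ j s - cornerModel C t δ j u =
      (s - u - (φ s - φ u)) • edgeVelocity C t (j - 1) + (φ s - φ u) • edgeVelocity C t j := by
    simp only [cornerModel, cornerJump, φ]
    module
  rw [gaussIntegrand, (hC.hasDerivAt_smoothing hδ hs).deriv, (hC.hasDerivAt_smoothing hδ hu).deriv,
    hC.smoothing_eq_cornerModel hδ hs, hC.smoothing_eq_cornerModel hδ hu, hdiff,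
    dot3_cross3_smul_add_smul_s5, zero_div]

lemma exists_abs_gaussIntegrand_smoothing_le (hC : IsClosedPolygon C n t)
    (hinj : InjOn C (Ico a (a + 1))) :
    ∃ K, ∀ᶠ δ in 𝓝[>] 0, ∀ s u, |gaussIntegrand (smoothing C t δ) s u| ≤ K := by
  obtain ⟨m, hm, hfar⟩ := hC.exists_pos_le_norm_smoothing_sub hinj
  obtain ⟨L, hL⟩ := hC.exists_norm_edgeVelocity_le
  refine ⟨L ^ 2 / m ^ 2, ?_⟩
  filter_upwards [hfar, hC.eventually_cornerWindow, self_mem_nhdsWithin] with δ hfar hcov hδ s u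
  by_cases hnear : (s, u) ∈ nearCornerPairs t δ
  · obtain ⟨j, k, l, hk, hl⟩ := hnear
    rw [← (hC.smoothing_periodic δ).gaussIntegrand_add_int s u k l,
      hC.gaussIntegrand_smoothing_eq_zero hδ hk hl, abs_zero]
    positivity
  · have hsu : m ≤ ‖smoothing C t δ s - smoothing C t δ u‖ := hfar (s, u) hnear
    exact abs_gaussIntegrand_le (hC.norm_deriv_smoothing_le hδ hcov.1 hL) hm hsu

lemma eventually_smoothing_eventuallyEq (hC : IsClosedPolygon C n t) {s : ℝ}
    (hs : s ∉ range t) : ∀ᶠ δ in 𝓝[>] 0, smoothing C t δ =ᶠ[𝓝 s] C := by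
  obtain ⟨j, hj, hj'⟩ := exists_le_lt_of_add_period hC.strictMono hC.add_period s
  have hj'' : t j < s := hj.lt_of_ne fun h => hs ⟨j, h⟩
  filter_upwards [Ioo_mem_nhdsGT (lt_min (sub_pos.2 hj'') (sub_pos.2 hj'))] with δ hδ
  have hmin := lt_min_iff.1 hδ.2
  filter_upwards [Ioo_mem_nhds (show t j + δ < s by linarith) (show s < t (j + 1) - δ by linarith)]
    with x hx using smoothing_eq_self_of_mem_Ioo hC.strictMono hδ.1 hx

lemma tendsto_writhe_smoothing (hC : IsClosedPolygon C n t) (hinj : InjOn C (Ico a (a + 1))) :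
    Tendsto (fun δ => writhe 1 (smoothing C t δ)) (𝓝[>] 0) (𝓝 (writhe 1 C)) := by
  obtain ⟨K, hK⟩ := hC.exists_abs_gaussIntegrand_smoothing_le hinj
  simp only [writhe_eq_gaussIntegrand]
  refine (tendsto_intervalIntegral_intervalIntegral_of_dominated ?_ hK ?_).const_mul _
  · filter_upwards [hC.eventually_cornerWindow, self_mem_nhdsWithin] with δ hcov hδ
    exact measurable_gaussIntegrand (hC.contDiff_smoothing hδ hcov.1).continuous.measurable
  · have hae : ∀ᵐ x : ℝ, x ∉ range t := (countable_range t).ae_notMem volume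
    filter_upwards [hae] with s hs
    filter_upwards [hae] with u hu
    refine tendsto_const_nhds.congr' ?_
    filter_upwards [hC.eventually_smoothing_eventuallyEq hs,
      hC.eventually_smoothing_eventuallyEq hu] with δ h₁ h₂
    exact (gaussIntegrand_congr h₁ h₂).symm

end IsClosedPolygon

end Writhe

theorem poly_smoothing_family_general
    (C : ℝ → EuclideanSpace ℝ (Fin 3)) (n : ℕ) (hn : 0 < n)
    (t : ℤ → ℝ) (e : ℤ → EuclideanSpace ℝ (Fin 3))
    (hP : Function.Periodic C 1) (hinj : Set.InjOn C (Set.Ico (t 0) (t 0 + 1)))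
    (ht : StrictMono t) (htper : ∀ j : ℤ, t (j + n) = t j + 1)
    (heunit : ∀ j : ℤ, ‖e j‖ = 1)
    (hlin : ∀ j : ℤ, ∀ s ∈ Set.Icc (t j) (t (j + 1)),
      C s = C (t j) + ((s - t j) / (t (j + 1) - t j)) • (C (t (j + 1)) - C (t j)))
    (hdir : ∀ j : ℤ, C (t (j + 1)) - C (t j) = ‖C (t (j + 1)) - C (t j)‖ • e j)
    -- positive corner angles: consecutive edge directions are not equal and not antipodal
    (hangle : ∀ j : ℤ, e (j - 1) ≠ e j ∧ e (j - 1) ≠ -e j) :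
    ∃ (Cs : ℕ → ℝ → EuclideanSpace ℝ (Fin 3)) (N : ℕ), 0 < N ∧
      (∀ i : ℕ, N ≤ i →
        -- `Cs i` is a simple closed regular `C¹` curve of period 1
        Function.Periodic (Cs i) 1 ∧ ContDiff ℝ 1 (Cs i) ∧
        (∀ s : ℝ, deriv (Cs i) s ≠ 0) ∧
        Set.InjOn (Cs i) (Set.Ico (t 0) (t 0 + 1)) ∧
        -- (1) `Cs i = C` outside the corner neighborhoods of radius `1/i`
        (∀ s : ℝ, (∀ j : ℤ, (1:ℝ) / i ≤ |s - t j|) → Cs i s = C s) ∧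
        -- (2) near each corner, the unit tangent of `Cs i` lies on the shorter
        -- great-circle arc joining the incoming and outgoing edge directions
        (∀ j : ℤ, ∀ s : ℝ, |s - t j| < 1 / i →
          ut (Cs i) s ∈ shorterArc (e (j - 1)) (e j))) ∧
      -- `Cs i → C` pointwise
      (∀ s : ℝ, Filter.Tendsto (fun i => Cs i s) Filter.atTop (nhds (C s))) ∧
      -- (3) `Wr (Cs i) → Wr C`
      Filter.Tendsto (fun i => writhe 1 (Cs i)) Filter.atTop (nhds (writhe 1 C)) := by
  have hC : IsClosedPolygon C n t := ⟨hP, ht, htper, hn, hlin⟩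
  have hanti : ∀ j, e (j - 1) ≠ -e j := fun j => (hangle j).2
  have hδ : Tendsto (fun i : ℕ => (1 : ℝ) / i) atTop (𝓝[>] 0) := by
    simp only [one_div]
    exact tendsto_inv_atTop_nhdsGT_zero.comp tendsto_natCast_atTop_atTop
  obtain ⟨N, hN⟩ := eventually_atTop.1 <| hδ.eventually <| hC.eventually_cornerWindow.and <|
    (hC.eventually_injOn_smoothing hinj hdir heunit hanti).and self_mem_nhdsWithin
  refine ⟨fun i => smoothing C t (1 / i), N + 1, N.succ_pos, fun i hi => ?_,
    fun s => (hC.tendsto_smoothing s).comp hδ, (hC.tendsto_writhe_smoothing hinj).comp hδ⟩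
  obtain ⟨⟨hcov, hnear⟩, hinjOn, hpos⟩ := hN i (by omega)
  refine ⟨hC.smoothing_periodic _, hC.contDiff_smoothing hpos hcov, fun s => ?_, hinjOn,
    fun s hs => smoothing_eq_self hpos hs,
    fun j s hs => hC.ut_smoothing_mem_shorterArc hinj hdir heunit hanti hpos (hnear j s hs)⟩
  obtain ⟨j, hj⟩ := hcov s
  exact hC.deriv_smoothing_ne_zero hinj hdir heunit hanti hpos hj

/-- Any embedded closed polygonal curve `C` of period 1 (corners at the
cyclic parameters `t j`, unit edge directions `e j`, positive corner angles: consecutive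
edge directions neither equal nor antipodal) admits a sequence of simple closed regular
`C¹` curves `Cs i` of period 1 converging pointwise to `C` such that (for all large `i`):
(1) `Cs i` agrees with `C` outside the union of intervals of radius `1/i` about the corner
parameters; (2) near each corner `t j` the unit tangent of `Cs i` takes values on the
shorter great-circle arc joining the incoming direction `e (j-1)` to the outgoing direction
`e j`; and (3) `Wr (Cs i) → Wr C`. -/
theorem poly_smoothing_family
    (C : ℝ → EuclideanSpace ℝ (Fin 3)) (n : ℕ) (hn : 0 < n)
    (t : ℤ → ℝ) (e : ℤ → EuclideanSpace ℝ (Fin 3))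
    (hP : Function.Periodic C 1) (hinj : Set.InjOn C (Set.Ico (t 0) (t 0 + 1)))
    (ht : StrictMono t) (htper : ∀ j : ℤ, t (j + n) = t j + 1)
    (heper : ∀ j : ℤ, e (j + n) = e j) (heunit : ∀ j : ℤ, ‖e j‖ = 1)
    (hlin : ∀ j : ℤ, ∀ s ∈ Set.Icc (t j) (t (j + 1)),
      C s = C (t j) + ((s - t j) / (t (j + 1) - t j)) • (C (t (j + 1)) - C (t j)))
    (hdir : ∀ j : ℤ, C (t (j + 1)) - C (t j) = ‖C (t (j + 1)) - C (t j)‖ • e j)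
    -- positive corner angles: consecutive edge directions are not equal and not antipodal
    (hangle : ∀ j : ℤ, e (j - 1) ≠ e j ∧ e (j - 1) ≠ -e j) :
    ∃ (Cs : ℕ → ℝ → EuclideanSpace ℝ (Fin 3)) (N : ℕ), 0 < N ∧
      (∀ i : ℕ, N ≤ i →
        -- `Cs i` is a simple closed regular `C¹` curve of period 1
        Function.Periodic (Cs i) 1 ∧ ContDiff ℝ 1 (Cs i) ∧
        (∀ s : ℝ, deriv (Cs i) s ≠ 0) ∧
        Set.InjOn (Cs i) (Set.Ico (t 0) (t 0 + 1)) ∧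
        -- (1) `Cs i = C` outside the corner neighborhoods of radius `1/i`
        (∀ s : ℝ, (∀ j : ℤ, (1:ℝ) / i ≤ |s - t j|) → Cs i s = C s) ∧
        -- (2) near each corner, the unit tangent of `Cs i` lies on the shorter
        -- great-circle arc joining the incoming and outgoing edge directions
        (∀ j : ℤ, ∀ s : ℝ, |s - t j| < 1 / i →
          ut (Cs i) s ∈ shorterArc (e (j - 1)) (e j))) ∧
      -- `Cs i → C` pointwise
      (∀ s : ℝ, Filter.Tendsto (fun i => Cs i s) Filter.atTop (nhds (C s))) ∧
      -- (3) `Wr (Cs i) → Wr C`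
      Filter.Tendsto (fun i => writhe 1 (Cs i)) Filter.atTop (nhds (writhe 1 C)) :=
  poly_smoothing_family_general C n hn t e hP hinj ht htper heunit hlin hdir hangle
end
end

section
/- (Schur chord bound.) Let C : [0, L] → ℝ³ be a C² curve parametrized by arclength (|C'(s)| = 1 for all s) with |C''(s)| ≤ K for all s, where K > 0 and K·L ≤ π. Then |C(L) − C(0)| ≥ (2/K)·sin(K·L/2); that is, the chord of C is at least as long as the chord subtending an arc of length L on a circle of radius 1/K. -/
/-!
The unit tangent `T = C'` is `K`-Lipschitz. Since the angle between unit vectors is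
`2 arcsin (‖u - v‖ / 2)` and satisfies the triangle inequality, subdividing `[s, t]` into `n`
pieces gives `angle (T s) (T t) ≤ n · 2 arcsin (K |t - s| / 2n) → K |t - s|`. As
`K |s - L/2| ≤ π` on `[0, L]` and `cos` decreases on `[0, π]`, this gives
`⟪T (L/2), T s⟫ ≥ cos (K (s - L/2))`, and integrating yields
`‖C L - C 0‖ ≥ ⟪T (L/2), C L - C 0⟫ ≥ ∫ cos (K (s - L/2)) ds = (2/K) sin (K L / 2)`.
-/

open Real InnerProductGeometry Filter Set
open scoped RealInnerProductSpace Topology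

theorem le_of_tendsto_nat_mul_comp_div {α : Type*} (d : α → α → ℝ)
    (htri : ∀ x y z, d x z ≤ d x y + d y z) (f : ℝ → α) {a b ℓ : ℝ} {ω : ℝ → ℝ} (hab : a ≤ b)
    (hω : ∀ s ∈ Icc a b, ∀ t ∈ Icc a b, s ≤ t → d (f s) (f t) ≤ ω (t - s))
    (hlim : Tendsto (fun n : ℕ => n * ω ((b - a) / n)) atTop (𝓝 ℓ)) :
    d (f a) (f b) ≤ ℓ := by
  refine ge_of_tendsto hlim (eventually_atTop.2 ⟨1, fun N hN => ?_⟩)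
  set h := (b - a) / N
  have hN' : (0 : ℝ) < N := by exact_mod_cast hN
  have hh : 0 ≤ h := div_nonneg (sub_nonneg.2 hab) hN'.le
  have hNh : N * h = b - a := mul_div_cancel₀ _ hN'.ne'
  have hmem : ∀ i : ℕ, i ≤ N → a + i * h ∈ Icc a b := fun i hi => by
    have : (i : ℝ) * h ≤ N * h := mul_le_mul_of_nonneg_right (by exact_mod_cast hi) hh
    constructor <;> nlinarith
  have chain : ∀ i, 1 ≤ i → i ≤ N → d (f a) (f (a + i * h)) ≤ i * ω h := by
    intro i hi
    induction i, hi using Nat.le_induction with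
    | base =>
      intro _
      simpa using hω _ (hmem 0 (Nat.zero_le _)) _ (hmem 1 hN) (by simpa using hh)
    | succ i hi ih =>
      intro hiN
      have step := hω _ (hmem i (by omega)) _ (hmem (i + 1) hiN) (by push_cast; linarith)
      rw [show a + ↑(i + 1) * h - (a + i * h) = h by push_cast; ring] at step
      calc d (f a) (f (a + ↑(i + 1) * h))
          ≤ d (f a) (f (a + i * h)) + d (f (a + i * h)) (f (a + ↑(i + 1) * h)) := htri _ _ _
        _ ≤ i * ω h + ω h := by
          gcongr
          exact ih (by omega)
        _ = ↑(i + 1) * ω h := by push_cast; ring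
  simpa [hNh] using chain N hN le_rfl

theorem tendsto_nat_mul_comp_div {ω : ℝ → ℝ} {K : ℝ} (hω : HasDerivAt ω K 0) (h0 : ω 0 = 0)
    (d : ℝ) : Tendsto (fun n : ℕ => n * ω (d / n)) atTop (𝓝 (K * d)) := by
  rcases eq_or_ne d 0 with rfl | hd
  · simp [h0]
  have hdiv : Tendsto (fun n : ℕ => d / n) atTop (𝓝[≠] 0) := by
    refine tendsto_nhdsWithin_of_tendsto_nhds_of_eventually_within _
      (tendsto_const_nhds.div_atTop tendsto_natCast_atTop_atTop) ?_
    filter_upwards [eventually_ne_atTop 0] with n hn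
    simp [hd, hn]
  have hslope := ((hasDerivAt_iff_tendsto_slope_zero.1 hω).comp hdiv).const_mul d
  refine (hslope.congr' ?_).trans (by rw [mul_comm])
  filter_upwards [eventually_ne_atTop 0] with n hn
  simp only [Function.comp_apply, zero_add, h0, sub_zero, smul_eq_mul]
  field_simp

theorem hasDerivAt_two_mul_arcsin_mul_div_two (K : ℝ) :
    HasDerivAt (fun h => 2 * arcsin (K * h / 2)) K 0 := by
  have hlin : HasDerivAt (fun h : ℝ => K * h / 2) (K / 2) 0 := by
    simpa using ((hasDerivAt_id (0 : ℝ)).const_mul K).div_const 2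
  have := ((hasDerivAt_arcsin (x := K * 0 / 2) (by norm_num) (by norm_num)).comp 0 hlin).const_mul 2
  exact this.congr_deriv (by simp; ring)

section InnerProductSpace

variable {E : Type*} [NormedAddCommGroup E] [InnerProductSpace ℝ E]

theorem angle_eq_two_mul_arcsin_of_norm_eq_one {u v : E} (hu : ‖u‖ = 1) (hv : ‖v‖ = 1) :
    angle u v = 2 * arcsin (‖u - v‖ / 2) := by
  have hθ0 := angle_nonneg u v
  have hθπ := angle_le_pi u v
  have hcos := norm_sub_sq_eq_norm_sq_add_norm_sq_sub_two_mul_norm_mul_norm_mul_cos_angle u v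
  have hsin : sin (angle u v / 2) = ‖u - v‖ / 2 := by
    rw [sin_half_eq_sqrt hθ0 (by linarith [pi_pos])]
    rw [show (1 - cos (angle u v)) / 2 = (‖u - v‖ / 2) ^ 2 by rw [div_pow, sq, hcos, hu, hv]; ring]
    exact sqrt_sq (by positivity)
  rw [← hsin, arcsin_sin (by linarith [pi_pos]) (by linarith)]
  ring

theorem cos_le_inner_of_angle_le {u v : E} (hu : ‖u‖ = 1) (hv : ‖v‖ = 1) {θ : ℝ}
    (hangle : angle u v ≤ θ) (hθ : θ ≤ π) : cos θ ≤ ⟪u, v⟫ := by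
  simpa [cos_angle, hu, hv] using cos_le_cos_of_nonneg_of_le_pi (angle_nonneg u v) hθ hangle

theorem angle_le_mul_abs_sub {T : ℝ → E} {S : Set ℝ} (hS : S.OrdConnected) {K : ℝ}
    (hunit : ∀ s ∈ S, ‖T s‖ = 1) (hlip : ∀ s ∈ S, ∀ t ∈ S, ‖T t - T s‖ ≤ K * ‖t - s‖)
    {s t : ℝ} (hs : s ∈ S) (ht : t ∈ S) : angle (T s) (T t) ≤ K * |t - s| := by
  wlog hst : s ≤ t generalizing s t
  · rw [angle_comm, abs_sub_comm]
    exact this ht hs (le_of_not_ge hst)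
  have hsub : Icc s t ⊆ S := hS.out hs ht
  rw [abs_of_nonneg (sub_nonneg.2 hst)]
  refine le_of_tendsto_nat_mul_comp_div angle angle_le_angle_add_angle T
    (ω := fun h => 2 * arcsin (K * h / 2)) hst
    (fun x hx y hy hxy => ?_)
    (tendsto_nat_mul_comp_div (hasDerivAt_two_mul_arcsin_mul_div_two K) (by simp) (t - s))
  have hchord : ‖T x - T y‖ ≤ K * (y - x) := by
    simpa [norm_sub_rev (T x), Real.norm_eq_abs, abs_of_nonneg (sub_nonneg.2 hxy)]
      using hlip x (hsub hx) y (hsub hy)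
  rw [angle_eq_two_mul_arcsin_of_norm_eq_one (hunit x (hsub hx)) (hunit y (hsub hy))]
  gcongr 2 * ?_
  exact monotone_arcsin (by linarith)

theorem cos_mul_sub_le_inner {T : ℝ → E} {S : Set ℝ} (hS : S.OrdConnected) {K : ℝ} (hK : 0 ≤ K)
    (hunit : ∀ s ∈ S, ‖T s‖ = 1) (hlip : ∀ s ∈ S, ∀ t ∈ S, ‖T t - T s‖ ≤ K * ‖t - s‖)
    {m s : ℝ} (hm : m ∈ S) (hs : s ∈ S) (hπ : K * |s - m| ≤ π) :
    cos (K * (s - m)) ≤ ⟪T m, T s⟫ := by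
  rw [← cos_abs, abs_mul, abs_of_nonneg hK]
  exact cos_le_inner_of_angle_le (hunit m hm) (hunit s hs)
    (angle_le_mul_abs_sub hS hunit hlip hm hs) hπ

theorem integral_le_norm_sub_of_le_inner {C : ℝ → E} {f : ℝ → ℝ} {u : E} {a b : ℝ} (hab : a ≤ b)
    (hC : ContDiff ℝ 1 C) (hu : ‖u‖ ≤ 1) (hf : IntervalIntegrable f MeasureTheory.volume a b)
    (hle : ∀ s ∈ Icc a b, f s ≤ ⟪u, deriv C s⟫) : ∫ s in a..b, f s ≤ ‖C b - C a‖ := by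
  have hderiv : ∀ s, HasDerivAt (fun s => ⟪u, C s⟫) ⟪u, deriv C s⟫ s := fun s => by
    simpa using (hasDerivAt_const s u).inner ℝ
      ((hC.differentiable one_ne_zero).differentiableAt.hasDerivAt)
  have hcont : Continuous fun s => ⟪u, deriv C s⟫ :=
    continuous_const.inner (hC.continuous_deriv le_rfl)
  calc ∫ s in a..b, f s ≤ ∫ s in a..b, ⟪u, deriv C s⟫ :=
        intervalIntegral.integral_mono_on hab hf (hcont.intervalIntegrable a b) hle
    _ = ⟪u, C b - C a⟫ := by
        rw [intervalIntegral.integral_eq_sub_of_hasDerivAt (fun s _ => hderiv s)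
          (hcont.intervalIntegrable a b), inner_sub_right]
    _ ≤ ‖u‖ * ‖C b - C a‖ := real_inner_le_norm u _
    _ ≤ ‖C b - C a‖ := mul_le_of_le_one_left (norm_nonneg _) hu

end InnerProductSpace

theorem integral_cos_mul_sub_half {K : ℝ} (hK : K ≠ 0) (L : ℝ) :
    ∫ s in (0 : ℝ)..L, cos (K * (s - L / 2)) = 2 / K * sin (K * L / 2) := by
  simp_rw [mul_sub]
  rw [intervalIntegral.integral_comp_mul_sub (f := cos) hK, integral_cos]
  rw [show K * L - K * (L / 2) = K * L / 2 by ring, show K * 0 - K * (L / 2) = -(K * L / 2) by ring,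
    sin_neg, smul_eq_mul]
  field_simp
  ring

/-- Schur chord bound. If `C : [0, L] → ℝ³` is a `C²` unit-speed curve
with curvature `|C''| ≤ K`, `K > 0`, and `K·L ≤ π`, then the chord satisfies
`|C L − C 0| ≥ (2/K)·sin (K·L/2)`. -/
theorem schur_chord_bound
    (C : ℝ → EuclideanSpace ℝ (Fin 3)) (L K : ℝ) (hL : 0 ≤ L) (hK : 0 < K)
    (hC : ContDiff ℝ 2 C)
    (hunit : ∀ s ∈ Set.Icc 0 L, ‖deriv C s‖ = 1)
    (hcurv : ∀ s ∈ Set.Icc 0 L, ‖iteratedDeriv 2 C s‖ ≤ K)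
    (hKL : K * L ≤ Real.pi) :
    (2 / K) * Real.sin (K * L / 2) ≤ ‖C L - C 0‖ := by
  have hT : ContDiff ℝ 1 (deriv C) := hC.iterate_deriv' 1 1
  have hlip : ∀ s ∈ Icc 0 L, ∀ t ∈ Icc 0 L, ‖deriv C t - deriv C s‖ ≤ K * ‖t - s‖ :=
    fun s hs t ht => (convex_Icc 0 L).norm_image_sub_le_of_norm_deriv_le
      (fun x _ => (hT.differentiable one_ne_zero).differentiableAt)
      (fun x hx => by simpa [iteratedDeriv_succ] using hcurv x hx) hs ht
  have hm : L / 2 ∈ Icc 0 L := ⟨by linarith, by linarith⟩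
  have hcos : ∀ s ∈ Icc 0 L, cos (K * (s - L / 2)) ≤ ⟪deriv C (L / 2), deriv C s⟫ :=
    fun s hs => cos_mul_sub_le_inner ordConnected_Icc hK.le hunit hlip hm hs <| by
      have : |s - L / 2| ≤ L / 2 := abs_le.2 ⟨by linarith [hs.1], by linarith [hs.2]⟩
      nlinarith
  rw [← integral_cos_mul_sub_half hK.ne' L]
  exact integral_le_norm_sub_of_le_inner hL (hC.of_le one_le_two) (hunit _ hm).le
    ((by fun_prop : Continuous fun s => cos (K * (s - L / 2))).intervalIntegrable _ _) hcos
end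

section
/- Let C : [0, L] → ℝ³ be a C² curve parametrized by arclength with |C''(s)| ≤ K for all s, where K > 0. Then for every s ∈ [0, L] with K·s ≤ π: |C(s) − C(0)| ≤ s and 0 ≤ s − |C(s) − C(0)| ≤ (K²/24)·s³ + (1/120)·s⁵. -/
/-!
Pair the chord `C s - C 0` with the unit tangent `e = C'(s/2)` at the midpoint. Since both
tangents are unit vectors, `⟪e, C' t⟫ = 1 - ‖C' t - e‖² / 2 ≥ 1 - K² (t - s/2)² / 2`, the
curvature bound making `C'` `K`-Lipschitz. Comparing derivatives on `[0, s]` with those of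
`t - K² (t - s/2)³ / 6` gives `‖C s - C 0‖ ≥ ⟪e, C s - C 0⟫ ≥ s - K² s³ / 24`.
-/

open Set

theorem real_inner_eq_one_sub_norm_sub_sq_div_two {F : Type*} [NormedAddCommGroup F]
    [InnerProductSpace ℝ F] {u v : F} (hu : ‖u‖ = 1) (hv : ‖v‖ = 1) :
    inner ℝ u v = 1 - ‖u - v‖ ^ 2 / 2 := by
  rw [norm_sub_sq_real, hu, hv]
  ring

theorem sub_le_sub_of_hasDerivAt_le {f g f' g' : ℝ → ℝ} {a b : ℝ} (hab : a ≤ b)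
    (hf : ∀ t ∈ Icc a b, HasDerivAt f (f' t) t) (hg : ∀ t ∈ Icc a b, HasDerivAt g (g' t) t)
    (hle : ∀ t ∈ Icc a b, g' t ≤ f' t) :
    g b - g a ≤ f b - f a := by
  have hmono : MonotoneOn (fun t => f t - g t) (Icc a b) := by
    refine monotoneOn_of_hasDerivWithinAt_nonneg (convex_Icc a b) (f' := fun t => f' t - g' t)
      (fun t ht => ((hf t ht).sub (hg t ht)).continuousAt.continuousWithinAt)
      (fun t ht => ((hf t (interior_subset ht)).sub (hg t (interior_subset ht))).hasDerivWithinAt)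
      (fun t ht => sub_nonneg.mpr (hle t (interior_subset ht)))
  have := hmono (left_mem_Icc.mpr hab) (right_mem_Icc.mpr hab) hab
  linarith

theorem sub_sub_le_norm_image_sub_of_unit_deriv_lipschitz {F : Type*} [NormedAddCommGroup F]
    [InnerProductSpace ℝ F] {f f' : ℝ → F} {a b K : ℝ} (hab : a ≤ b)
    (hf : ∀ t ∈ Icc a b, HasDerivAt f (f' t) t) (hunit : ∀ t ∈ Icc a b, ‖f' t‖ = 1)
    (hlip : ∀ t ∈ Icc a b, ‖f' t - f' ((a + b) / 2)‖ ≤ K * |t - (a + b) / 2|) :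
    b - a - K ^ 2 / 24 * (b - a) ^ 3 ≤ ‖f b - f a‖ := by
  set m := (a + b) / 2 with hm
  set e := f' m
  have he : ‖e‖ = 1 := hunit m ⟨by linarith, by linarith⟩
  have hinner : ∀ t ∈ Icc a b, 1 - K ^ 2 / 2 * (t - m) ^ 2 ≤ inner ℝ e (f' t) := by
    intro t ht
    have hsq : ‖f' t - e‖ ^ 2 ≤ K ^ 2 * (t - m) ^ 2 := by
      calc ‖f' t - e‖ ^ 2 ≤ (K * |t - m|) ^ 2 := pow_le_pow_left₀ (norm_nonneg _) (hlip t ht) 2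
        _ = K ^ 2 * (t - m) ^ 2 := by rw [mul_pow, sq_abs]
    rw [real_inner_eq_one_sub_norm_sub_sq_div_two he (hunit t ht), norm_sub_rev]
    linarith
  have hcubic (t : ℝ) : HasDerivAt (fun t => t - K ^ 2 / 6 * (t - m) ^ 3)
      (1 - K ^ 2 / 2 * (t - m) ^ 2) t := by
    refine ((hasDerivAt_id t).sub
      ((((hasDerivAt_id t).sub_const m).pow 3).const_mul (K ^ 2 / 6))).congr_deriv ?_
    simp only [id, Nat.cast_ofNat]
    ring
  have hcompare := sub_le_sub_of_hasDerivAt_le hab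
    (fun t ht => (innerSL ℝ e).hasFDerivAt.comp_hasDerivAt t (hf t ht)) (fun t _ => hcubic t)
    (fun t ht => by simpa only [ContinuousLinearMap.coe_coe, innerSL_apply_apply] using hinner t ht)
  have hcs : inner ℝ e (f b - f a) ≤ ‖f b - f a‖ := by
    simpa [he] using real_inner_le_norm e (f b - f a)
  simp only [Function.comp_apply, innerSL_apply_apply, ← inner_sub_right] at hcompare
  have hcubic_diff : b - K ^ 2 / 6 * (b - m) ^ 3 - (a - K ^ 2 / 6 * (a - m) ^ 3)
      = b - a - K ^ 2 / 24 * (b - a) ^ 3 := by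
    rw [hm]; ring
  linarith

theorem chord_length_estimate_general
    (C : ℝ → EuclideanSpace ℝ (Fin 3)) (L K : ℝ)
    (hC : ContDiff ℝ 2 C)
    (hunit : ∀ s ∈ Set.Icc 0 L, ‖deriv C s‖ = 1)
    (hcurv : ∀ s ∈ Set.Icc 0 L, ‖iteratedDeriv 2 C s‖ ≤ K) :
    ∀ s ∈ Set.Icc 0 L, K * s ≤ Real.pi →
      ‖C s - C 0‖ ≤ s ∧
      0 ≤ s - ‖C s - C 0‖ ∧
      s - ‖C s - C 0‖ ≤ K ^ 2 / 24 * s ^ 3 + 1 / 120 * s ^ 5 := by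
  intro s ⟨hs0, hsL⟩ _
  have hCdiff : Differentiable ℝ C := hC.differentiable (by norm_num)
  have hTdiff : Differentiable ℝ (deriv C) :=
    (hC.iterate_deriv' 1 1).differentiable (by norm_num)
  have hsub : Icc 0 s ⊆ Icc 0 L := Icc_subset_Icc_right hsL
  have hchord : ‖C s - C 0‖ ≤ s := by
    simpa [abs_of_nonneg hs0] using (convex_Icc 0 L).norm_image_sub_le_of_norm_deriv_le
      (fun t _ => hCdiff t) (fun t ht => (hunit t ht).le) ⟨le_rfl, hs0.trans hsL⟩ ⟨hs0, hsL⟩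
  have hlower : s - 0 - K ^ 2 / 24 * (s - 0) ^ 3 ≤ ‖C s - C 0‖ := by
    refine sub_sub_le_norm_image_sub_of_unit_deriv_lipschitz hs0
      (fun t _ => (hCdiff t).hasDerivAt) (fun t ht => hunit t (hsub ht)) (fun t ht => ?_)
    have hm : (0 + s) / 2 ∈ Icc 0 s := ⟨by linarith, by linarith⟩
    simpa [Real.norm_eq_abs] using (convex_Icc 0 L).norm_image_sub_le_of_norm_deriv_le
      (fun x _ => hTdiff x) (fun x hx => by simpa [iteratedDeriv_succ] using hcurv x hx)
      (hsub hm) (hsub ht)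
  refine ⟨hchord, by linarith, ?_⟩
  nlinarith [pow_nonneg hs0 5]

/-- If `C : [0, L] → ℝ³` is a `C²` unit-speed curve with curvature
`|C''| ≤ K`, `K > 0`, then for every `s ∈ [0, L]` with `K·s ≤ π` we have
`|C s − C 0| ≤ s` and `0 ≤ s − |C s − C 0| ≤ (K²/24)·s³ + (1/120)·s⁵`. -/
theorem chord_length_estimate
    (C : ℝ → EuclideanSpace ℝ (Fin 3)) (L K : ℝ) (hL : 0 ≤ L) (hK : 0 < K)
    (hC : ContDiff ℝ 2 C)
    (hunit : ∀ s ∈ Set.Icc 0 L, ‖deriv C s‖ = 1)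
    (hcurv : ∀ s ∈ Set.Icc 0 L, ‖iteratedDeriv 2 C s‖ ≤ K) :
    ∀ s ∈ Set.Icc 0 L, K * s ≤ Real.pi →
      ‖C s - C 0‖ ≤ s ∧
      0 ≤ s - ‖C s - C 0‖ ∧
      s - ‖C s - C 0‖ ≤ K ^ 2 / 24 * s ^ 3 + 1 / 120 * s ^ 5 :=
  chord_length_estimate_general C L K hC hunit hcurv
end

section
/- Let C : [0, L] → ℝ³ be a C² curve parametrized by arclength with |C''(s)| ≤ K for all s, where K > 0, and let 0 ≤ a < b ≤ L with K·(b − a) ≤ π. If |C(b) − C(a)| ≤ x and K·x ≤ 2/5, then b − a ≤ 1.01·x; that is, the arclength between two points of the curve is at most 1.01 times any bound x on the chord length, provided 1/x ≥ (5/2)·K. -/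
/-!
Fix the unit tangent `v = C'(m)` at the midpoint `m` of `[a, b]`. The curvature bound makes `C'`
`K`-Lipschitz, and for unit vectors `⟪v, w⟫ = 1 - ‖v - w‖² / 2`, so `⟪v, C'(s)⟫ ≥ 1 - K²(s - m)²/2`.
Integrating over `[a, b]` gives `‖C b - C a‖ ≥ ⟪v, C b - C a⟫ ≥ ℓ - K²ℓ³/24` with `ℓ = b - a`.
For `t = Kℓ ≤ π` and `u = Kx ≤ 2/5`, the inequality `t - t³/24 ≤ u` forces `t` onto the small
branch of the cubic, where `t ≤ 1.01 u`.
-/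

open Set intervalIntegral
open scoped InnerProductSpace

lemma one_sub_sq_div_two_le_inner {E : Type*} [NormedAddCommGroup E] [InnerProductSpace ℝ E]
    {u v : E} {r : ℝ} (hu : ‖u‖ = 1) (hv : ‖v‖ = 1) (huv : ‖u - v‖ ≤ r) :
    1 - r ^ 2 / 2 ≤ ⟪u, v⟫_ℝ := by
  have hsq : ‖u - v‖ ^ 2 ≤ r ^ 2 := pow_le_pow_left₀ (norm_nonneg _) huv 2
  rw [norm_sub_sq_real, hu, hv] at hsq
  linarith

lemma integral_one_sub_mul_sq_sub_midpoint (a b c : ℝ) :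
    ∫ s in a..b, (1 - c * (s - (a + b) / 2) ^ 2 / 2) = (b - a) - c * (b - a) ^ 3 / 24 := by
  have hsq : ∫ s in a..b, (s - (a + b) / 2) ^ 2 = (b - a) ^ 3 / 12 := by
    rw [integral_comp_sub_right (· ^ 2), integral_pow]
    ring
  rw [integral_sub intervalIntegrable_const (Continuous.intervalIntegrable (by fun_prop) a b),
    integral_div, integral_const_mul, hsq, integral_const, smul_eq_mul]
  ring

lemma inner_sub_eq_integral_inner_deriv {E : Type*} [NormedAddCommGroup E] [InnerProductSpace ℝ E]
    {C : ℝ → E} (hC : ContDiff ℝ 1 C) (v : E) (a b : ℝ) :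
    ⟪v, C b - C a⟫_ℝ = ∫ s in a..b, ⟪v, deriv C s⟫_ℝ := by
  rw [inner_sub_right, integral_eq_sub_of_hasDerivAt (f := fun s => ⟪v, C s⟫_ℝ)]
  · intro s _
    exact ((innerSL ℝ v).hasFDerivAt.comp_hasDerivAt s
      ((hC.differentiable one_ne_zero s).hasDerivAt))
  · exact (continuous_const.inner (hC.continuous_deriv le_rfl)).intervalIntegrable a b

theorem length_sub_cube_le_norm_sub {E : Type*} [NormedAddCommGroup E] [InnerProductSpace ℝ E]
    {C : ℝ → E} {a b K : ℝ} (hC : ContDiff ℝ 2 C) (hab : a ≤ b)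
    (hunit : ∀ s ∈ Icc a b, ‖deriv C s‖ = 1)
    (hcurv : ∀ s ∈ Icc a b, ‖iteratedDeriv 2 C s‖ ≤ K) :
    (b - a) - K ^ 2 * (b - a) ^ 3 / 24 ≤ ‖C b - C a‖ := by
  have hm : (a + b) / 2 ∈ Icc a b := ⟨by linarith, by linarith⟩
  set m := (a + b) / 2
  set v := deriv C m
  have hv : ‖v‖ = 1 := hunit m hm
  have hlip : ∀ s ∈ Icc a b, ‖v - deriv C s‖ ≤ K * |s - m| := fun s hs => by
    simpa only [Real.norm_eq_abs, abs_sub_comm m s] using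
      (convex_Icc a b).norm_image_sub_le_of_norm_deriv_le
        (fun y _ => hC.differentiable_deriv_two y)
        (fun y hy => by simpa [iteratedDeriv_succ] using hcurv y hy) hs hm
  have hinner : ∀ s ∈ Icc a b, 1 - K ^ 2 * (s - m) ^ 2 / 2 ≤ ⟪v, deriv C s⟫_ℝ := by
    intro s hs
    have := one_sub_sq_div_two_le_inner hv (hunit s hs) (hlip s hs)
    rwa [mul_pow, sq_abs] at this
  calc (b - a) - K ^ 2 * (b - a) ^ 3 / 24
      = ∫ s in a..b, (1 - K ^ 2 * (s - m) ^ 2 / 2) :=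
        (integral_one_sub_mul_sq_sub_midpoint a b _).symm
    _ ≤ ∫ s in a..b, ⟪v, deriv C s⟫_ℝ :=
        integral_mono_on hab (Continuous.intervalIntegrable (by fun_prop) a b)
          ((continuous_const.inner (hC.continuous_deriv one_le_two)).intervalIntegrable a b)
          hinner
    _ = ⟪v, C b - C a⟫_ℝ := (inner_sub_eq_integral_inner_deriv (hC.of_le one_le_two) v a b).symm
    _ ≤ ‖C b - C a‖ := by simpa [hv] using real_inner_le_norm v (C b - C a)

lemma le_mul_of_sub_cube_div_le {t u : ℝ} (ht : 0 ≤ t) (htπ : t ≤ Real.pi) (hu : u ≤ 2 / 5)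
    (h : t - t ^ 3 / 24 ≤ u) : t ≤ 1.01 * u := by
  -- `t ↦ t - t³/24` exceeds `2/5` on `[0.41, 3.15]`; each bound on `t` sharpens the next.
  have ht_le₁ : t ≤ 3.15 := htπ.trans Real.pi_lt_d2.le
  have ht_le₂ : t ≤ 0.69 := by nlinarith [mul_nonneg ht ht, mul_nonneg (mul_nonneg ht ht) ht]
  have ht_le₃ : t ≤ 0.41 := by nlinarith [mul_nonneg ht ht]
  nlinarith [mul_nonneg ht ht, mul_nonneg (mul_nonneg ht ht) ht]

/-- If `C : [0, L] → ℝ³` is a `C²` unit-speed curve with curvature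
`|C''| ≤ K`, `K > 0`, and `0 ≤ a < b ≤ L` with `K·(b − a) ≤ π`, `|C b − C a| ≤ x`, and
`K·x ≤ 2/5` (i.e. `1/x ≥ (5/2)·K`), then the arclength satisfies `b − a ≤ 1.01·x`. -/
theorem arclength_le_chord_bound
    (C : ℝ → EuclideanSpace ℝ (Fin 3)) (L K a b x : ℝ) (hK : 0 < K)
    (hC : ContDiff ℝ 2 C)
    (hunit : ∀ s ∈ Set.Icc 0 L, ‖deriv C s‖ = 1)
    (hcurv : ∀ s ∈ Set.Icc 0 L, ‖iteratedDeriv 2 C s‖ ≤ K)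
    (ha : 0 ≤ a) (hab : a < b) (hbL : b ≤ L)
    (harc : K * (b - a) ≤ Real.pi)
    (hchord : ‖C b - C a‖ ≤ x) (hx : K * x ≤ 2 / 5) :
    b - a ≤ 1.01 * x := by
  have hsub : Icc a b ⊆ Icc 0 L := Icc_subset_Icc ha hbL
  have hlen : (b - a) - K ^ 2 * (b - a) ^ 3 / 24 ≤ x :=
    (length_sub_cube_le_norm_sub hC hab.le (fun s hs => hunit s (hsub hs))
      (fun s hs => hcurv s (hsub hs))).trans hchord
  have hscaled : K * (b - a) - (K * (b - a)) ^ 3 / 24 ≤ K * x :=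
    calc K * (b - a) - (K * (b - a)) ^ 3 / 24 = K * ((b - a) - K ^ 2 * (b - a) ^ 3 / 24) := by ring
      _ ≤ K * x := mul_le_mul_of_nonneg_left hlen hK.le
  have hbound : K * (b - a) ≤ 1.01 * (K * x) :=
    le_mul_of_sub_cube_div_le (mul_nonneg hK.le (sub_nonneg.2 hab.le)) harc hx hscaled
  exact le_of_mul_le_mul_left (by linarith) hK
end

section
/- Writhe is not continuous in any C^k norm on closed curves: there exists a sequence of simple closed curves γ_i : ℝ → ℝ³ of period 1, each of class C^∞ with regular parametrization, and a closed C^∞ regular curve γ : ℝ → ℝ³ of period 1 whose writhe integral converges, such that for every m ≥ 0 the derivatives γ_i^{(m)} converge uniformly to γ^{(m)} as i → ∞, while Wr(γ_i) → 1 and Wr(γ) = 0. -/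
noncomputable section

open Real MeasureTheory intervalIntegral Filter

namespace WritheAux

def vec3 (a b c : ℝ) : EuclideanSpace ℝ (Fin 3) := WithLp.toLp 2 ![a, b, c]

@[simp] lemma vec3_zero (a b c : ℝ) : vec3 a b c 0 = a := rfl
@[simp] lemma vec3_one (a b c : ℝ) : vec3 a b c 1 = b := rfl
@[simp] lemma vec3_two (a b c : ℝ) : vec3 a b c 2 = c := rfl

def crv (ε : ℝ) (t : ℝ) : EuclideanSpace ℝ (Fin 3) :=
  vec3 (Real.sin (4*π*t)) (Real.sin (2*π*t)) (-(ε * Real.cos (2*π*t)))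

def dcrv (ε : ℝ) (t : ℝ) : EuclideanSpace ℝ (Fin 3) :=
  vec3 (4*π*Real.cos (4*π*t)) (2*π*Real.cos (2*π*t)) (ε * (2*π*Real.sin (2*π*t)))

lemma hasDerivAt3 {f g h : ℝ → ℝ} {f' g' h' : ℝ} {t : ℝ}
    (hf : HasDerivAt f f' t) (hg : HasDerivAt g g' t) (hh : HasDerivAt h h' t) :
    HasDerivAt (fun t => vec3 (f t) (g t) (h t)) (vec3 f' g' h') t := by
  have hp : HasDerivAt (fun t => (![f t, g t, h t] : Fin 3 → ℝ)) ![f', g', h'] t := by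
    rw [hasDerivAt_pi]
    intro i
    fin_cases i <;> simpa using ‹_›
  exact ((PiLp.continuousLinearEquiv 2 ℝ (fun _ : Fin 3 => ℝ)).symm.toContinuousLinearMap.hasFDerivAt).comp_hasDerivAt t hp

lemma hd_lin (c t : ℝ) : HasDerivAt (fun t : ℝ => c * t) c t := by
  simpa using (hasDerivAt_id t).const_mul c

lemma hd_sin (c t : ℝ) : HasDerivAt (fun t : ℝ => Real.sin (c * t)) (c * Real.cos (c * t)) t := by
  have := (Real.hasDerivAt_sin (c*t)).comp t (hd_lin c t)
  refine this.congr_deriv ?_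
  ring

lemma hd_cos (c t : ℝ) : HasDerivAt (fun t : ℝ => Real.cos (c * t)) (-(c * Real.sin (c * t))) t := by
  have := (Real.hasDerivAt_cos (c*t)).comp t (hd_lin c t)
  refine this.congr_deriv ?_
  ring

lemma hasDerivAt_crv (ε t : ℝ) : HasDerivAt (crv ε) (dcrv ε t) t := by
  have h3 : HasDerivAt (fun t : ℝ => -(ε * Real.cos (2*π*t))) (ε * (2*π*Real.sin (2*π*t))) t := by
    have := ((hd_cos (2*π) t).const_mul ε).neg
    refine this.congr_deriv ?_
    ring
  exact hasDerivAt3 (hd_sin (4*π) t) (hd_sin (2*π) t) h3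

lemma deriv_crv (ε t : ℝ) : deriv (crv ε) t = dcrv ε t := (hasDerivAt_crv ε t).deriv

lemma contDiff_crv (ε : ℝ) : ContDiff ℝ (⊤ : ℕ∞) (crv ε) := by
  rw [contDiff_euclidean]
  intro i
  have hs4 : ContDiff ℝ (⊤ : ℕ∞) (fun t : ℝ => Real.sin (4*π*t)) :=
    Real.contDiff_sin.comp (contDiff_const.mul contDiff_id)
  have hs2 : ContDiff ℝ (⊤ : ℕ∞) (fun t : ℝ => Real.sin (2*π*t)) :=
    Real.contDiff_sin.comp (contDiff_const.mul contDiff_id)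
  have hc2 : ContDiff ℝ (⊤ : ℕ∞) (fun t : ℝ => -(ε * Real.cos (2*π*t))) :=
    (contDiff_const.mul (Real.contDiff_cos.comp (contDiff_const.mul contDiff_id))).neg
  fin_cases i <;> simpa [crv, vec3]

lemma periodic_crv (ε : ℝ) : Function.Periodic (crv ε) 1 := by
  intro t
  unfold crv
  have e1 : 4*π*(t+1) = 4*π*t + 2*π + 2*π := by ring
  have e2 : 2*π*(t+1) = 2*π*t + 2*π := by ring
  rw [e1, e2, Real.sin_add_two_pi, Real.sin_add_two_pi, Real.sin_add_two_pi, Real.cos_add_two_pi]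

lemma deriv_crv_ne (ε t : ℝ) : deriv (crv ε) t ≠ 0 := by
  rw [deriv_crv]
  intro h
  have h0 : (4*π*Real.cos (4*π*t)) = 0 := congrArg (fun v => v 0) h
  have h1 : (2*π*Real.cos (2*π*t)) = 0 := congrArg (fun v => v 1) h
  have hpi := Real.pi_pos
  have hc2 : Real.cos (2*π*t) = 0 := by
    rcases mul_eq_zero.mp h1 with h' | h'
    · nlinarith
    · exact h'
  have hc4 : Real.cos (4*π*t) = 0 := by
    rcases mul_eq_zero.mp h0 with h' | h'
    · nlinarith
    · exact h'
  have hdm : Real.cos (4*π*t) = 2 * Real.cos (2*π*t)^2 - 1 := by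
    rw [show (4*π*t) = 2*(2*π*t) by ring, Real.cos_two_mul]
  rw [hdm, hc2] at hc4
  norm_num at hc4

lemma injOn_crv {ε : ℝ} (hε : ε ≠ 0) : Set.InjOn (crv ε) (Set.Ico (0:ℝ) 1) := by
  intro s hs t ht hst
  have h1 : Real.sin (2*π*s) = Real.sin (2*π*t) := by
    have := congrArg (fun v => v 1) hst
    simpa [crv] using this
  have h2 : Real.cos (2*π*s) = Real.cos (2*π*t) := by
    have h2' : -(ε * Real.cos (2*π*s)) = -(ε * Real.cos (2*π*t)) := by
      have := congrArg (fun v => v 2) hst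
      simpa [crv] using this
    exact mul_left_cancel₀ hε (neg_injective h2')
  have hexp : Complex.exp ((2*π*s : ℝ) * Complex.I) = Complex.exp ((2*π*t : ℝ) * Complex.I) := by
    rw [Complex.exp_mul_I, Complex.exp_mul_I,
      ← Complex.ofReal_cos, ← Complex.ofReal_sin, ← Complex.ofReal_cos, ← Complex.ofReal_sin,
      h1, h2]
  rw [Complex.exp_eq_exp_iff_exists_int] at hexp
  obtain ⟨n, hn⟩ := hexp
  have heq : ((2*π*s : ℝ) : ℂ) * Complex.I = ((2*π*t + n * (2*π) : ℝ) : ℂ) * Complex.I := by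
    rw [hn]; push_cast; ring
  have hre : (2*π*s : ℝ) = 2*π*t + n * (2*π) := by
    have := mul_right_cancel₀ Complex.I_ne_zero heq
    exact_mod_cast this
  have hpi := Real.pi_pos
  have hsn : s = t + n := by nlinarith [hre]
  obtain ⟨hs0, hs1⟩ := hs
  obtain ⟨ht0, ht1⟩ := ht
  have hn0 : n = 0 := by
    have h1' : (n:ℝ) < 1 := by nlinarith
    have h2' : (-1:ℝ) < n := by nlinarith
    exact_mod_cast by
      have : n < 1 := by exact_mod_cast h1'
      have : (-1:ℤ) < n := by exact_mod_cast h2'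
      omega
  rw [hsn, hn0]
  push_cast
  ring

-- chunk 2: the planar limit curve
@[simp] lemma cross3_zero (v w : EuclideanSpace ℝ (Fin 3)) :
    cross3 v w 0 = v 1 * w 2 - v 2 * w 1 := rfl
@[simp] lemma cross3_one (v w : EuclideanSpace ℝ (Fin 3)) :
    cross3 v w 1 = v 2 * w 0 - v 0 * w 2 := rfl
@[simp] lemma cross3_two (v w : EuclideanSpace ℝ (Fin 3)) :
    cross3 v w 2 = v 0 * w 1 - v 1 * w 0 := rfl

lemma dot3_eq (v w : EuclideanSpace ℝ (Fin 3)) :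
    dot3 v w = v 0 * w 0 + v 1 * w 1 + v 2 * w 2 := by
  simp [dot3, PiLp.inner_apply, Fin.sum_univ_three, RCLike.inner_apply, mul_comm]

lemma planar_integrand (s t : ℝ) :
    dot3 (cross3 (deriv (crv 0) s) (deriv (crv 0) t)) (crv 0 s - crv 0 t) /
      ‖crv 0 s - crv 0 t‖ ^ 3 = 0 := by
  rw [dot3_eq]
  have hsub : ∀ i, (crv 0 s - crv 0 t) i = crv 0 s i - crv 0 t i := fun i => rfl
  rw [deriv_crv, deriv_crv]
  simp only [cross3_zero, cross3_one, cross3_two, hsub]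
  simp [crv, dcrv]

lemma writhe_crv_zero : writhe 1 (crv 0) = 0 := by
  unfold writhe
  have : ∀ s : ℝ, (∫ t in (0:ℝ)..1,
      dot3 (cross3 (deriv (crv 0) s) (deriv (crv 0) t)) (crv 0 s - crv 0 t) /
        ‖crv 0 s - crv 0 t‖ ^ 3) = 0 := by
    intro s
    rw [intervalIntegral.integral_congr (g := fun _ => (0:ℝ)) (fun t _ => planar_integrand s t)]
    simp
  rw [intervalIntegral.integral_congr (g := fun _ => (0:ℝ)) (fun s _ => this s)]
  simp

lemma integrableOn_planar :
    MeasureTheory.IntegrableOn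
      (fun p : ℝ × ℝ =>
        dot3 (cross3 (deriv (crv 0) p.1) (deriv (crv 0) p.2)) (crv 0 p.1 - crv 0 p.2) /
          ‖crv 0 p.1 - crv 0 p.2‖ ^ 3)
      (Set.Icc (0:ℝ) 1 ×ˢ Set.Icc (0:ℝ) 1) := by
  have : (fun p : ℝ × ℝ =>
      dot3 (cross3 (deriv (crv 0) p.1) (deriv (crv 0) p.2)) (crv 0 p.1 - crv 0 p.2) /
        ‖crv 0 p.1 - crv 0 p.2‖ ^ 3) = fun _ => (0:ℝ) := by
    funext p
    exact planar_integrand p.1 p.2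
  rw [this]
  exact integrableOn_zero

-- chunk 3: uniform convergence of iterated derivatives
def bv (t : ℝ) : EuclideanSpace ℝ (Fin 3) := vec3 0 0 (-Real.cos (2*π*t))

def e3 : EuclideanSpace ℝ (Fin 3) := vec3 0 0 1

lemma contDiff_u (c : ℝ) : ContDiff ℝ (⊤ : ℕ∞) (fun t : ℝ => Real.cos (2*π*t + c)) :=
  Real.contDiff_cos.comp ((contDiff_const.mul contDiff_id).add contDiff_const)

lemma contDiff_bv : ContDiff ℝ (⊤ : ℕ∞) bv := by
  rw [show bv = fun t => crv 1 t - crv 0 t by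
    funext t; ext i
    fin_cases i <;> simp [bv, crv, vec3] <;> rfl]
  exact (contDiff_crv 1).sub (contDiff_crv 0)

lemma natcast_lt_top (n : ℕ) : (n : WithTop ℕ∞) < ((⊤ : ℕ∞) : WithTop ℕ∞) := by
  exact_mod_cast WithTop.coe_lt_coe.2 (ENat.coe_lt_top n)

lemma itd_add {F : Type*} [NormedAddCommGroup F] [NormedSpace ℝ F] {f g : ℝ → F}
    (hf : ContDiff ℝ (⊤ : ℕ∞) f) (hg : ContDiff ℝ (⊤ : ℕ∞) g) (m : ℕ) :
    iteratedDeriv m (fun t => f t + g t) = fun t => iteratedDeriv m f t + iteratedDeriv m g t := by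
  induction m with
  | zero => simp
  | succ n ih =>
    rw [iteratedDeriv_succ, ih, iteratedDeriv_succ, iteratedDeriv_succ]
    funext t
    exact deriv_fun_add
      ((hf.differentiable_iteratedDeriv n (natcast_lt_top n)) t)
      ((hg.differentiable_iteratedDeriv n (natcast_lt_top n)) t)

lemma itd_csmul {F : Type*} [NormedAddCommGroup F] [NormedSpace ℝ F] {f : ℝ → F}
    (hf : ContDiff ℝ (⊤ : ℕ∞) f) (c : ℝ) (m : ℕ) :
    iteratedDeriv m (fun t => c • f t) = fun t => c • iteratedDeriv m f t := by
  induction m with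
  | zero => simp
  | succ n ih =>
    rw [iteratedDeriv_succ, ih, iteratedDeriv_succ]
    funext t
    exact deriv_const_smul c ((hf.differentiable_iteratedDeriv n (natcast_lt_top n)) t)

lemma itd_smul_const {u : ℝ → ℝ} (hu : ContDiff ℝ (⊤ : ℕ∞) u) (v : EuclideanSpace ℝ (Fin 3)) (m : ℕ) :
    iteratedDeriv m (fun t => u t • v) = fun t => iteratedDeriv m u t • v := by
  induction m with
  | zero => simp
  | succ n ih =>
    rw [iteratedDeriv_succ, ih, iteratedDeriv_succ]
    funext t
    exact deriv_smul_const ((hu.differentiable_iteratedDeriv n (natcast_lt_top n)) t) v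

lemma itd_cmul {u : ℝ → ℝ} (hu : ContDiff ℝ (⊤ : ℕ∞) u) (c : ℝ) (m : ℕ) :
    iteratedDeriv m (fun t => c * u t) = fun t => c * iteratedDeriv m u t := by
  simpa [smul_eq_mul] using itd_csmul (F := ℝ) hu c m

lemma itd_cosaff (m : ℕ) : ∀ (c : ℝ),
    iteratedDeriv m (fun t : ℝ => Real.cos (2*π*t + c)) =
      fun t => (2*π)^m * Real.cos (2*π*t + c + m*(π/2)) := by
  induction m with
  | zero => intro c; simp
  | succ n ih =>
    intro c
    rw [iteratedDeriv_succ']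
    have hder : deriv (fun t : ℝ => Real.cos (2*π*t + c)) =
        fun t => 2*π * Real.cos (2*π*t + (c + π/2)) := by
      funext t
      have h1 : HasDerivAt (fun t : ℝ => 2*π*t + c) (2*π) t := (hd_lin (2*π) t).add_const c
      have h2 : HasDerivAt (fun t : ℝ => Real.cos (2*π*t + c)) (-Real.sin (2*π*t + c) * (2*π)) t :=
        by have h := (Real.hasDerivAt_cos (2*π*t + c)).comp t h1; exact h
      rw [h2.deriv]
      rw [show 2*π*t + (c + π/2) = (2*π*t + c) + π/2 by ring, Real.cos_add_pi_div_two]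
      ring
    rw [hder, itd_cmul (contDiff_u (c + π/2)) (2*π) n, ih (c + π/2)]
    funext t
    have harg : 2*π*t + (c + π/2) + (n:ℝ)*(π/2) = 2*π*t + c + ((n:ℝ)+1)*(π/2) := by ring
    simp only [harg]
    push_cast
    ring

lemma bv_eq_smul : bv = fun t => Real.cos (2*π*t + π) • e3 := by
  funext t; ext i
  fin_cases i <;> simp [bv, e3, vec3, Real.cos_add_pi] <;> rfl

lemma norm_e3 : ‖e3‖ = 1 := by
  rw [EuclideanSpace.norm_eq]
  have : ∀ i : Fin 3, ‖e3 i‖^2 = (if i = 2 then 1 else 0) := by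
    intro i
    fin_cases i <;> simp [e3, vec3]
  rw [Fin.sum_univ_three]
  simp [e3, vec3]

lemma norm_itd_bv (m : ℕ) (t : ℝ) : ‖iteratedDeriv m bv t‖ ≤ (2*π)^m := by
  rw [bv_eq_smul, itd_smul_const (contDiff_u π) e3, itd_cosaff m π]
  rw [norm_smul, norm_e3, mul_one]
  have hpi := Real.pi_pos
  have h1 : |Real.cos (2*π*t + π + m*(π/2))| ≤ 1 := Real.abs_cos_le_one _
  have h2 : |(2*π)^m * Real.cos (2*π*t + π + m*(π/2))| =
      (2*π)^m * |Real.cos (2*π*t + π + m*(π/2))| := by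
    rw [abs_mul, abs_of_nonneg (by positivity)]
  calc ‖(2*π)^m * Real.cos (2*π*t + π + m*(π/2))‖ = _ := h2
    _ ≤ (2*π)^m * 1 := by
        apply mul_le_mul_of_nonneg_left h1 (by positivity)
    _ = (2*π)^m := mul_one _

lemma crv_decomp (ε : ℝ) : crv ε = fun t => crv 0 t + ε • bv t := by
  funext t; ext i
  fin_cases i <;> simp [crv, bv, vec3] <;> ring

lemma itd_crv_sub (ε : ℝ) (m : ℕ) (t : ℝ) :
    iteratedDeriv m (crv ε) t = iteratedDeriv m (crv 0) t + ε • iteratedDeriv m bv t := by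
  conv_lhs => rw [crv_decomp ε]
  rw [itd_add (contDiff_crv 0) (contDiff_bv.const_smul ε) m]
  rw [itd_csmul contDiff_bv ε m]

lemma tendstoUniformly_itd (m : ℕ) :
    TendstoUniformly (fun (i : ℕ) (t : ℝ) => iteratedDeriv m (crv (1/(i+1))) t)
      (iteratedDeriv m (crv 0)) Filter.atTop := by
  rw [Metric.tendstoUniformly_iff]
  intro η hη
  have hto : Filter.Tendsto (fun i : ℕ => (1/(i+1:ℝ)) * (2*π)^m) Filter.atTop (nhds 0) := by
    simpa using tendsto_one_div_add_atTop_nhds_zero_nat.mul_const ((2*π)^m)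
  filter_upwards [hto.eventually (gt_mem_nhds hη)] with i hi t
  have hb : dist (iteratedDeriv m (crv 0) t) (iteratedDeriv m (crv (1/(i+1))) t) ≤
      (1/(i+1:ℝ)) * (2*π)^m := by
    rw [dist_eq_norm, itd_crv_sub (1/(i+1)) m t]
    have : iteratedDeriv m (crv 0) t - (iteratedDeriv m (crv 0) t + (1/(i+1:ℝ)) • iteratedDeriv m bv t)
        = -((1/(i+1:ℝ)) • iteratedDeriv m bv t) := by abel
    rw [this, norm_neg, norm_smul]
    have h1 : ‖(1/(i+1:ℝ))‖ = 1/(i+1:ℝ) := by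
      rw [Real.norm_eq_abs, abs_of_pos (by positivity)]
    rw [h1]
    exact mul_le_mul_of_nonneg_left (norm_itd_bv m t) (by positivity)
  exact lt_of_le_of_lt hb hi

-- chunk 4: the explicit form of the writhe integrand
def gg (ε a b : ℝ) : ℝ :=
  4*Real.cos (π*a)^2*Real.cos (2*π*b)^2 + Real.cos (π*b)^2 + ε^2*Real.sin (π*b)^2

def phi (ε a b : ℝ) : ℝ :=
  -(4*π^2*ε) * |Real.sin (π*a)| * Real.cos (2*π*b) / (gg ε a b * Real.sqrt (gg ε a b))

lemma gg_sq_le {ε : ℝ} (hε : 0 < ε) (hε1 : ε ≤ 1) (a b : ℝ) : ε^2 ≤ gg ε a b := by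
  unfold gg
  have h1 : ε^2 ≤ 1 := by nlinarith
  nlinarith [Real.sin_sq_add_cos_sq (π*b), sq_nonneg (Real.cos (π*a) * Real.cos (2*π*b)),
    mul_nonneg (sub_nonneg.2 h1) (sq_nonneg (Real.cos (π*b)))]

lemma gg_pos {ε : ℝ} (hε : 0 < ε) (hε1 : ε ≤ 1) (a b : ℝ) : 0 < gg ε a b :=
  lt_of_lt_of_le (by positivity) (gg_sq_le hε hε1 a b)

lemma hA1 (s t : ℝ) : Real.sin (4*π*s) - Real.sin (4*π*t) =
    4*Real.sin (π*(s-t))*Real.cos (π*(s-t))*Real.cos (2*π*(s+t)) := by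
  rw [Real.sin_sub_sin, show (4*π*s - 4*π*t)/2 = 2*(π*(s-t)) by ring,
    show (4*π*s + 4*π*t)/2 = 2*π*(s+t) by ring, Real.sin_two_mul]
  ring

lemma hA2 (s t : ℝ) : Real.sin (2*π*s) - Real.sin (2*π*t) =
    2*Real.sin (π*(s-t))*Real.cos (π*(s+t)) := by
  rw [Real.sin_sub_sin, show (2*π*s - 2*π*t)/2 = π*(s-t) by ring,
    show (2*π*s + 2*π*t)/2 = π*(s+t) by ring]

lemma hA3 (ε s t : ℝ) : -(ε * Real.cos (2*π*s)) - -(ε * Real.cos (2*π*t)) =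
    2*ε*Real.sin (π*(s+t))*Real.sin (π*(s-t)) := by
  have h : Real.cos (2*π*t) - Real.cos (2*π*s) =
      2*Real.sin (π*(s+t))*Real.sin (π*(s-t)) := by
    rw [Real.cos_sub_cos, show (2*π*t + 2*π*s)/2 = π*(s+t) by ring,
      show (2*π*t - 2*π*s)/2 = -(π*(s-t)) by ring, Real.sin_neg]
    ring
  linear_combination ε * h

lemma hB4 (s t : ℝ) : Real.cos (2*π*t) * Real.sin (π*(s+t)) -
    Real.sin (2*π*t) * Real.cos (π*(s+t)) = Real.sin (π*(s-t)) := by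
  rw [show π*(s-t) = π*(s+t) - 2*π*t by ring, Real.sin_sub]
  ring

lemma hB5 (s t : ℝ) : Real.cos (2*π*s) * Real.sin (π*(s+t)) -
    Real.sin (2*π*s) * Real.cos (π*(s+t)) = -Real.sin (π*(s-t)) := by
  have : Real.sin (π*(s+t) - 2*π*s) = -Real.sin (π*(s-t)) := by
    rw [show π*(s+t) - 2*π*s = -(π*(s-t)) by ring, Real.sin_neg]
  rw [← this, Real.sin_sub]
  ring

lemma hB6 (s t : ℝ) : Real.cos (2*π*s) * Real.sin (2*π*t) -
    Real.sin (2*π*s) * Real.cos (2*π*t) =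
    -(2*Real.sin (π*(s-t))*Real.cos (π*(s-t))) := by
  have h1 : Real.sin (2*π*t - 2*π*s) =
      Real.sin (2*π*t) * Real.cos (2*π*s) - Real.cos (2*π*t) * Real.sin (2*π*s) :=
    Real.sin_sub _ _
  have h2 : Real.sin (2*π*t - 2*π*s) = -(2*Real.sin (π*(s-t))*Real.cos (π*(s-t))) := by
    rw [show 2*π*t - 2*π*s = -(2*(π*(s-t))) by ring, Real.sin_neg, Real.sin_two_mul]
  linarith [h1, h2]

lemma hB7 (s t : ℝ) : Real.cos (4*π*s) + Real.cos (4*π*t) =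
    2*Real.cos (2*π*(s+t))*Real.cos (2*(π*(s-t))) := by
  rw [Real.cos_add_cos, show (4*π*s + 4*π*t)/2 = 2*π*(s+t) by ring,
    show (4*π*s - 4*π*t)/2 = 2*(π*(s-t)) by ring]

lemma hB8 (s t : ℝ) : Real.cos (2*(π*(s-t))) =
    Real.cos (π*(s-t))^2 - Real.sin (π*(s-t))^2 := by
  rw [Real.cos_two_mul]
  linear_combination Real.sin_sq_add_cos_sq (π*(s-t))

lemma num_eq (ε s t : ℝ) :
    dot3 (cross3 (dcrv ε s) (dcrv ε t)) (crv ε s - crv ε t) =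
      -32*π^2*ε*Real.sin (π*(s-t))^4*Real.cos (2*π*(s+t)) := by
  rw [dot3_eq]
  have hsub : ∀ i, (crv ε s - crv ε t) i = crv ε s i - crv ε t i := fun i => rfl
  simp only [cross3_zero, cross3_one, cross3_two, hsub]
  simp only [crv, dcrv, vec3_zero, vec3_one, vec3_two]
  linear_combination
    ((2*π*Real.cos (2*π*s))*(ε*(2*π*Real.sin (2*π*t))) -
      (ε*(2*π*Real.sin (2*π*s)))*(2*π*Real.cos (2*π*t))) * hA1 s t +
    ((ε*(2*π*Real.sin (2*π*s)))*(4*π*Real.cos (4*π*t)) -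
      (4*π*Real.cos (4*π*s))*(ε*(2*π*Real.sin (2*π*t)))) * hA2 s t +
    ((4*π*Real.cos (4*π*s))*(2*π*Real.cos (2*π*t)) -
      (2*π*Real.cos (2*π*s))*(4*π*Real.cos (4*π*t))) * hA3 ε s t +
    (16*π^2*ε*Real.sin (π*(s-t))*Real.cos (4*π*s)) * hB4 s t -
    (16*π^2*ε*Real.sin (π*(s-t))*Real.cos (4*π*t)) * hB5 s t +
    (16*π^2*ε*Real.sin (π*(s-t))*Real.cos (π*(s-t))*Real.cos (2*π*(s+t))) * hB6 s t +
    (16*π^2*ε*Real.sin (π*(s-t))^2) * hB7 s t +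
    (32*π^2*ε*Real.sin (π*(s-t))^2*Real.cos (2*π*(s+t))) * hB8 s t

lemma norm_sq_eq (ε s t : ℝ) :
    ‖crv ε s - crv ε t‖^2 = 4*Real.sin (π*(s-t))^2 * gg ε (s-t) (s+t) := by
  have h : ‖crv ε s - crv ε t‖^2 = ∑ i : Fin 3, ((crv ε s - crv ε t) i)^2 := by
    rw [EuclideanSpace.norm_eq, Real.sq_sqrt (by positivity)]
    congr 1
    funext i
    rw [Real.norm_eq_abs, sq_abs]
  rw [h, Fin.sum_univ_three]
  have hsub : ∀ i, (crv ε s - crv ε t) i = crv ε s i - crv ε t i := fun i => rfl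
  simp only [hsub]
  simp only [crv, vec3_zero, vec3_one, vec3_two]
  rw [hA1 s t, hA2 s t, hA3 ε s t]
  unfold gg
  ring

lemma abs_quad (x : ℝ) : |x|^4 = x^4 := by
  rw [pow_abs]
  exact abs_of_nonneg (by positivity)

lemma integrand_eq {ε : ℝ} (hε : 0 < ε) (hε1 : ε ≤ 1) (s t : ℝ) :
    dot3 (cross3 (deriv (crv ε) s) (deriv (crv ε) t)) (crv ε s - crv ε t) /
      ‖crv ε s - crv ε t‖ ^ 3 = phi ε (s-t) (s+t) := by
  rw [deriv_crv, deriv_crv, num_eq]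
  have hgpos : 0 < gg ε (s-t) (s+t) := gg_pos hε hε1 _ _
  obtain ⟨r, hr, hrG⟩ : ∃ r : ℝ, 0 < r ∧ gg ε (s-t) (s+t) = r^2 :=
    ⟨Real.sqrt (gg ε (s-t) (s+t)), Real.sqrt_pos.2 hgpos, (Real.sq_sqrt hgpos.le).symm⟩
  have hnorm : ‖crv ε s - crv ε t‖ = 2 * |Real.sin (π*(s-t))| * r := by
    have h1 : ‖crv ε s - crv ε t‖ = Real.sqrt (4*Real.sin (π*(s-t))^2 * gg ε (s-t) (s+t)) := by
      rw [← norm_sq_eq, Real.sqrt_sq (norm_nonneg _)]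
    have h2 : 4*Real.sin (π*(s-t))^2 * gg ε (s-t) (s+t) =
        (2 * |Real.sin (π*(s-t))| * r)^2 := by
      rw [hrG, mul_pow, mul_pow, sq_abs]
      ring
    rw [h1, h2, Real.sqrt_sq (by positivity)]
  rw [hnorm]
  unfold phi
  rw [hrG, Real.sqrt_sq hr.le]
  rcases eq_or_ne (Real.sin (π*(s-t))) 0 with h0 | h0
  · rw [h0]
    simp
  · have habs : 0 < |Real.sin (π*(s-t))| := abs_pos.2 h0
    rw [show Real.sin (π*(s-t))^4 = |Real.sin (π*(s-t))|^4 from (abs_quad _).symm]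
    field_simp
    ring

-- chunk 5a: continuity and integral manipulations
lemma continuous_gg2 (ε : ℝ) : Continuous (fun p : ℝ × ℝ => gg ε p.1 p.2) := by
  unfold gg
  fun_prop

lemma continuous_phi2 {ε : ℝ} (hε : 0 < ε) (hε1 : ε ≤ 1) :
    Continuous (fun p : ℝ × ℝ => phi ε p.1 p.2) := by
  unfold phi
  apply Continuous.div
  · fun_prop
  · exact (continuous_gg2 ε).mul ((continuous_gg2 ε).sqrt)
  · intro p
    have h := gg_pos hε hε1 p.1 p.2
    positivity

lemma swap01 {F : ℝ → ℝ → ℝ} (hF : Continuous fun p : ℝ × ℝ => F p.1 p.2) :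
    (∫ x in (0:ℝ)..1, ∫ y in (0:ℝ)..1, F x y) = ∫ y in (0:ℝ)..1, ∫ x in (0:ℝ)..1, F x y := by
  simp only [intervalIntegral.integral_of_le (zero_le_one (α := ℝ))]
  apply MeasureTheory.integral_integral_swap
  rw [MeasureTheory.Measure.prod_restrict]
  apply MeasureTheory.IntegrableOn.mono_set
    (t := Set.Icc (0:ℝ) 1 ×ˢ Set.Icc (0:ℝ) 1)
  · exact ContinuousOn.integrableOn_compact (isCompact_Icc.prod isCompact_Icc)
      hF.continuousOn
  · exact Set.prod_mono Set.Ioc_subset_Icc_self Set.Ioc_subset_Icc_self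

lemma gg_shift1 (ε a b : ℝ) : gg ε (a+1) (b-1) = gg ε a b := by
  unfold gg
  rw [show π*(a+1) = π*a + π by ring, Real.cos_add_pi,
      show 2*π*(b-1) = 2*π*b - 2*π by ring, Real.cos_sub_two_pi,
      show π*(b-1) = π*b - π by ring, Real.cos_sub_pi, Real.sin_sub_pi]
  ring

lemma phi_shift1 (ε a b : ℝ) : phi ε (a+1) (b-1) = phi ε a b := by
  unfold phi
  rw [gg_shift1, show π*(a+1) = π*a + π by ring, Real.sin_add_pi, abs_neg,
      show 2*π*(b-1) = 2*π*b - 2*π by ring, Real.cos_sub_two_pi]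

lemma gg_per_b (ε a b : ℝ) : gg ε a (b+1) = gg ε a b := by
  unfold gg
  rw [show 2*π*(b+1) = 2*π*b + 2*π by ring, Real.cos_add_two_pi,
      show π*(b+1) = π*b + π by ring, Real.cos_add_pi, Real.sin_add_pi]
  ring

lemma phi_per_b (ε a b : ℝ) : phi ε a (b+1) = phi ε a b := by
  unfold phi
  rw [gg_per_b, show 2*π*(b+1) = 2*π*b + 2*π by ring, Real.cos_add_two_pi]

lemma inner_t {ε : ℝ} (hε : 0 < ε) (hε1 : ε ≤ 1) (s : ℝ) :
    (∫ t in (0:ℝ)..1, phi ε (s-t) (s+t)) = ∫ τ in (0:ℝ)..1, phi ε τ (2*s-τ) := by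
  have hfun : (fun t => phi ε (s-t) (s+t)) = fun t => (fun τ => phi ε τ (2*s-τ)) (s-t) := by
    funext t
    show phi ε (s-t) (s+t) = phi ε (s-t) (2*s-(s-t))
    congr 1
    ring
  rw [hfun, intervalIntegral.integral_comp_sub_left (fun τ => phi ε τ (2*s-τ)) s]
  have hper : Function.Periodic (fun τ => phi ε τ (2*s-τ)) 1 := by
    intro τ
    show phi ε (τ+1) (2*s-(τ+1)) = phi ε τ (2*s-τ)
    rw [show 2*s-(τ+1) = (2*s-τ) - 1 by ring]
    exact phi_shift1 ε τ (2*s-τ)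
  have := hper.intervalIntegral_add_eq (s-1) 0
  rw [show s - 1 + 1 = s by ring, zero_add] at this
  rw [show s - (0:ℝ) = s by ring]
  exact this

lemma continuous_phi_b {ε : ℝ} (hε : 0 < ε) (hε1 : ε ≤ 1) (a : ℝ) :
    Continuous (fun b => phi ε a b) := by
  have hg : Continuous (fun b => gg ε a b) := by unfold gg; fun_prop
  unfold phi
  apply Continuous.div
  · fun_prop
  · exact hg.mul hg.sqrt
  · intro b
    have h := gg_pos hε hε1 a b
    positivity

lemma inner_s {ε : ℝ} (hε : 0 < ε) (hε1 : ε ≤ 1) (τ : ℝ) :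
    (∫ s in (0:ℝ)..1, phi ε τ (2*s-τ)) = ∫ σ in (0:ℝ)..1, phi ε τ σ := by
  have hcont : Continuous (fun σ => phi ε τ σ) := continuous_phi_b hε hε1 τ
  have hi : ∀ a b : ℝ, IntervalIntegrable (fun σ => phi ε τ σ) volume a b :=
    fun a b => hcont.intervalIntegrable a b
  have h1 : (∫ s in (0:ℝ)..1, phi ε τ (2*s-τ)) =
      (2:ℝ)⁻¹ • ∫ z in (2*(0:ℝ))..(2*(1:ℝ)), phi ε τ (z - τ) := by
    exact intervalIntegral.integral_comp_mul_left (fun z => phi ε τ (z - τ)) two_ne_zero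
  rw [h1]
  norm_num
  have hper : Function.Periodic (fun σ => phi ε τ σ) 1 := fun b => phi_per_b ε τ b
  have hsplit : (∫ z in (-τ)..(2-τ), phi ε τ z) =
      (∫ z in (-τ)..(1-τ), phi ε τ z) + ∫ z in (1-τ)..(2-τ), phi ε τ z :=
    (intervalIntegral.integral_add_adjacent_intervals (hi _ _) (hi _ _)).symm
  have hp1 : (∫ z in (-τ)..(1-τ), phi ε τ z) = ∫ z in (0:ℝ)..1, phi ε τ z := by
    have := hper.intervalIntegral_add_eq (-τ) 0
    rw [show -τ + 1 = 1 - τ by ring, zero_add] at this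
    exact this
  have hp2 : (∫ z in (1-τ)..(2-τ), phi ε τ z) = ∫ z in (0:ℝ)..1, phi ε τ z := by
    have := hper.intervalIntegral_add_eq (1-τ) 0
    rw [show 1 - τ + 1 = 2 - τ by ring, zero_add] at this
    exact this
  rw [hsplit, hp1, hp2]
  ring

-- chunk 5b: exact inner integral and the writhe formula
def AA (σ : ℝ) : ℝ := 4*Real.cos (2*π*σ)^2

def BB (ε σ : ℝ) : ℝ := Real.cos (π*σ)^2 + ε^2*Real.sin (π*σ)^2

lemma AA_nonneg (σ : ℝ) : 0 ≤ AA σ := by unfold AA; positivity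

lemma BB_pos {ε : ℝ} (hε : 0 < ε) (hε1 : ε ≤ 1) (σ : ℝ) : 0 < BB ε σ := by
  unfold BB
  have h1 : ε^2 ≤ 1 := by nlinarith
  have h3 : ε^2*Real.sin (π*σ)^2 + ε^2*Real.cos (π*σ)^2 = ε^2 := by
    linear_combination ε^2 * Real.sin_sq_add_cos_sq (π*σ)
  nlinarith [mul_nonneg (sub_nonneg.2 h1) (sq_nonneg (Real.cos (π*σ))), pow_pos hε 2]

lemma QQ_pos {ε : ℝ} (hε : 0 < ε) (hε1 : ε ≤ 1) (σ τ : ℝ) :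
    0 < AA σ * Real.cos (π*τ)^2 + BB ε σ := by
  nlinarith [mul_nonneg (AA_nonneg σ) (sq_nonneg (Real.cos (π*τ))), BB_pos hε hε1 σ]

lemma gg_eq_Q (ε σ τ : ℝ) : gg ε τ σ = AA σ * Real.cos (π*τ)^2 + BB ε σ := by
  unfold gg AA BB
  ring

lemma tau_exact {ε : ℝ} (hε : 0 < ε) (hε1 : ε ≤ 1) (σ : ℝ) :
    (∫ τ in (0:ℝ)..1, phi ε τ σ) =
      -8*π*ε*Real.cos (2*π*σ) / (BB ε σ * Real.sqrt (AA σ + BB ε σ)) := by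
  have hpi := Real.pi_pos
  have hA : 0 ≤ AA σ := AA_nonneg σ
  have hB : 0 < BB ε σ := BB_pos hε hε1 σ
  have hQpos : ∀ τ : ℝ, 0 < AA σ * Real.cos (π*τ)^2 + BB ε σ := QQ_pos hε hε1 σ
  have hstep : Set.EqOn (fun τ => phi ε τ σ)
      (fun τ => (-(4*π^2*ε) * Real.cos (2*π*σ)) *
        (Real.sin (π*τ) / ((AA σ * Real.cos (π*τ)^2 + BB ε σ) *
          Real.sqrt (AA σ * Real.cos (π*τ)^2 + BB ε σ)))) (Set.uIcc 0 1) := by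
    intro τ hτ
    rw [Set.uIcc_of_le (zero_le_one (α := ℝ))] at hτ
    have hsin : 0 ≤ Real.sin (π*τ) := by
      apply Real.sin_nonneg_of_nonneg_of_le_pi
      · exact mul_nonneg hpi.le hτ.1
      · nlinarith [hτ.2]
    show phi ε τ σ = _
    unfold phi
    rw [gg_eq_Q, abs_of_nonneg hsin]
    ring
  rw [intervalIntegral.integral_congr hstep, intervalIntegral.integral_const_mul]
  have hderiv : ∀ τ ∈ Set.uIcc (0:ℝ) 1,
      HasDerivAt (fun τ => -Real.cos (π*τ) /
          (π * BB ε σ * Real.sqrt (AA σ * Real.cos (π*τ)^2 + BB ε σ)))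
        (Real.sin (π*τ) / ((AA σ * Real.cos (π*τ)^2 + BB ε σ) *
          Real.sqrt (AA σ * Real.cos (π*τ)^2 + BB ε σ))) τ := by
    intro τ _
    have hc : HasDerivAt (fun τ => Real.cos (π*τ)) (-(π*Real.sin (π*τ))) τ := hd_cos π τ
    have hQd : HasDerivAt (fun τ => AA σ * Real.cos (π*τ)^2 + BB ε σ)
        (AA σ * (2*Real.cos (π*τ)*(-(π*Real.sin (π*τ))))) τ := by
      have h := ((hc.pow 2).const_mul (AA σ)).add_const (BB ε σ)
      refine h.congr_deriv ?_
      push_cast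
      ring
    have hdp := hQpos τ
    have hsqd : HasDerivAt (fun τ => Real.sqrt (AA σ * Real.cos (π*τ)^2 + BB ε σ))
        (AA σ * (2*Real.cos (π*τ)*(-(π*Real.sin (π*τ)))) /
          (2*Real.sqrt (AA σ * Real.cos (π*τ)^2 + BB ε σ))) τ := by
      have h := (Real.hasDerivAt_sqrt (ne_of_gt hdp)).comp τ hQd
      refine h.congr_deriv ?_
      field_simp
    have hnum : HasDerivAt (fun τ => -Real.cos (π*τ)) (π*Real.sin (π*τ)) τ := by
      have := hc.neg
      refine this.congr_deriv ?_
      ring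
    have hden : HasDerivAt (fun τ => π * BB ε σ * Real.sqrt (AA σ * Real.cos (π*τ)^2 + BB ε σ))
        (π * BB ε σ * (AA σ * (2*Real.cos (π*τ)*(-(π*Real.sin (π*τ)))) /
          (2*Real.sqrt (AA σ * Real.cos (π*τ)^2 + BB ε σ)))) τ := hsqd.const_mul _
    have hrpos : 0 < Real.sqrt (AA σ * Real.cos (π*τ)^2 + BB ε σ) := Real.sqrt_pos.2 hdp
    have hne : π * BB ε σ * Real.sqrt (AA σ * Real.cos (π*τ)^2 + BB ε σ) ≠ 0 := by positivity
    have hdiv := hnum.div hden hne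
    refine hdiv.congr_deriv ?_
    set r := Real.sqrt (AA σ * Real.cos (π*τ)^2 + BB ε σ) with hr
    rw [show AA σ * Real.cos (π*τ)^2 + BB ε σ = r^2 from (Real.sq_sqrt hdp.le).symm]
    have hrne : r ≠ 0 := ne_of_gt hrpos
    have hrQ : r^2 = AA σ * Real.cos (π*τ)^2 + BB ε σ := Real.sq_sqrt hdp.le
    field_simp
    linear_combination (Real.sin (π*τ)) * hrQ
  have hint : IntervalIntegrable (fun τ => Real.sin (π*τ) /
      ((AA σ * Real.cos (π*τ)^2 + BB ε σ) *
        Real.sqrt (AA σ * Real.cos (π*τ)^2 + BB ε σ))) volume 0 1 := by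
    apply Continuous.intervalIntegrable
    apply Continuous.div
    · fun_prop
    · apply Continuous.mul
      · fun_prop
      · apply Continuous.sqrt
        fun_prop
    · intro τ
      have := hQpos τ
      have := Real.sqrt_pos.2 (hQpos τ)
      positivity
  rw [intervalIntegral.integral_eq_sub_of_hasDerivAt hderiv hint]
  have e1 : π * (1:ℝ) = π := mul_one π
  have e0 : π * (0:ℝ) = 0 := mul_zero π
  rw [e1, e0, Real.cos_pi, Real.cos_zero]
  have hABpos : 0 < AA σ + BB ε σ := by nlinarith [hA, hB]
  have hQ1 : AA σ * (-1:ℝ)^2 + BB ε σ = AA σ + BB ε σ := by ring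
  have hQ0 : AA σ * (1:ℝ)^2 + BB ε σ = AA σ + BB ε σ := by ring
  rw [hQ1, hQ0]
  have hsq : 0 < Real.sqrt (AA σ + BB ε σ) := Real.sqrt_pos.2 hABpos
  field_simp
  ring

lemma continuous_phiST {ε : ℝ} (hε : 0 < ε) (hε1 : ε ≤ 1) :
    Continuous (fun p : ℝ × ℝ => phi ε p.2 (2*p.1 - p.2)) := by
  have hg : Continuous (fun p : ℝ × ℝ => gg ε p.2 (2*p.1 - p.2)) := by unfold gg; fun_prop
  unfold phi
  apply Continuous.div
  · fun_prop
  · exact hg.mul hg.sqrt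
  · intro p
    have h := gg_pos hε hε1 p.2 (2*p.1 - p.2)
    positivity

lemma writhe_eq {ε : ℝ} (hε : 0 < ε) (hε1 : ε ≤ 1) :
    writhe 1 (crv ε) = ∫ σ in (0:ℝ)..1,
      -2*ε*Real.cos (2*π*σ) / (BB ε σ * Real.sqrt (AA σ + BB ε σ)) := by
  have hpi := Real.pi_pos
  unfold writhe
  have h1 : Set.EqOn
      (fun s => ∫ t in (0:ℝ)..1,
        dot3 (cross3 (deriv (crv ε) s) (deriv (crv ε) t)) (crv ε s - crv ε t) /
          ‖crv ε s - crv ε t‖ ^ 3)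
      (fun s => ∫ τ in (0:ℝ)..1, phi ε τ (2*s-τ)) (Set.uIcc 0 1) := by
    intro s _
    show (∫ t in (0:ℝ)..1,
        dot3 (cross3 (deriv (crv ε) s) (deriv (crv ε) t)) (crv ε s - crv ε t) /
          ‖crv ε s - crv ε t‖ ^ 3) = ∫ τ in (0:ℝ)..1, phi ε τ (2*s-τ)
    rw [intervalIntegral.integral_congr (g := fun t => phi ε (s-t) (s+t))
      (fun t _ => integrand_eq hε hε1 s t)]
    exact inner_t hε hε1 s
  rw [intervalIntegral.integral_congr h1]
  rw [swap01 (F := fun s τ => phi ε τ (2*s-τ)) (continuous_phiST hε hε1)]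
  rw [intervalIntegral.integral_congr (g := fun τ => ∫ σ in (0:ℝ)..1, phi ε τ σ)
    (fun τ _ => inner_s hε hε1 τ)]
  rw [swap01 (F := fun τ σ => phi ε τ σ) (continuous_phi2 hε hε1)]
  rw [intervalIntegral.integral_congr (g := fun σ =>
    -8*π*ε*Real.cos (2*π*σ) / (BB ε σ * Real.sqrt (AA σ + BB ε σ)))
    (fun σ _ => tau_exact hε hε1 σ)]
  rw [← intervalIntegral.integral_const_mul]
  apply intervalIntegral.integral_congr
  intro σ _
  show (1/(4*π)) * _ = _
  have hB := BB_pos hε hε1 σ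
  have hABpos : 0 < AA σ + BB ε σ := by nlinarith [AA_nonneg σ, hB]
  have hsq : 0 < Real.sqrt (AA σ + BB ε σ) := Real.sqrt_pos.2 hABpos
  field_simp
  ring

-- chunk 5c: the exact integral of ε/B
lemma continuous_invB {ε : ℝ} (hε : 0 < ε) (hε1 : ε ≤ 1) :
    Continuous (fun σ => ε / BB ε σ) := by
  have hg : Continuous (fun σ => BB ε σ) := by unfold BB; fun_prop
  exact Continuous.div continuous_const hg (fun σ => ne_of_gt (BB_pos hε hε1 σ))

lemma F1_deriv {ε : ℝ} (hε : 0 < ε) {b : ℝ} (hcos : Real.cos (π*b) ≠ 0) :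
    HasDerivAt (fun b => (1/π) * Real.arctan (ε * Real.tan (π*b))) (ε / BB ε b) b := by
  have hpi := Real.pi_pos
  have ht : HasDerivAt (fun b => Real.tan (π*b)) (1 / Real.cos (π*b)^2 * π) b :=
    (Real.hasDerivAt_tan hcos).comp b (hd_lin π b)
  have ht2 : HasDerivAt (fun b => ε * Real.tan (π*b)) (ε * (1 / Real.cos (π*b)^2 * π)) b :=
    ht.const_mul ε
  have ha : HasDerivAt (fun b => Real.arctan (ε * Real.tan (π*b)))
      (1/(1 + (ε * Real.tan (π*b))^2) * (ε * (1 / Real.cos (π*b)^2 * π))) b :=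
    by have h := (Real.hasDerivAt_arctan (ε * Real.tan (π*b))).comp b ht2; exact h
  have h := ha.const_mul (1/π)
  refine h.congr_deriv ?_
  rw [Real.tan_eq_sin_div_cos]
  unfold BB
  have hB := sq_nonneg (Real.cos (π*b))
  field_simp

lemma F2_deriv {ε : ℝ} (hε : 0 < ε) {b : ℝ} (hsin : Real.sin (π*b) ≠ 0) :
    HasDerivAt (fun b => -((1/π) * Real.arctan (Real.cos (π*b) / (ε * Real.sin (π*b)))))
      (ε / BB ε b) b := by
  have hpi := Real.pi_pos
  have hεne : ε ≠ 0 := ne_of_gt hε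
  have hdne : ε * Real.sin (π*b) ≠ 0 := mul_ne_zero hεne hsin
  have hnum : HasDerivAt (fun b => Real.cos (π*b)) (-(π * Real.sin (π*b))) b := hd_cos π b
  have hden : HasDerivAt (fun b => ε * Real.sin (π*b)) (ε * (π * Real.cos (π*b))) b :=
    (hd_sin π b).const_mul ε
  have hu := hnum.div hden hdne
  have ha := (Real.hasDerivAt_arctan (Real.cos (π*b) / (ε * Real.sin (π*b)))).comp b hu
  have h := (ha.const_mul (1/π)).neg
  refine h.congr_deriv ?_
  have hkey : -(π * Real.sin (π*b)) * (ε * Real.sin (π*b)) -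
      Real.cos (π*b) * (ε * (π * Real.cos (π*b))) = -(ε*π) := by
    linear_combination (-(ε*π)) * Real.sin_sq_add_cos_sq (π*b)
  rw [hkey]
  unfold BB
  field_simp
  ring

lemma M_eq {ε : ℝ} (hε : 0 < ε) (hε1 : ε ≤ 1) :
    (∫ σ in (0:ℝ)..1, ε / BB ε σ) = 1 := by
  have hpi := Real.pi_pos
  have hcont := continuous_invB hε hε1
  have hi : ∀ a b : ℝ, IntervalIntegrable (fun σ => ε / BB ε σ) volume a b :=
    fun a b => hcont.intervalIntegrable a b
  have hp1 : (∫ σ in (0:ℝ)..(1/4), ε / BB ε σ) = (1/π) * Real.arctan ε := by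
    rw [intervalIntegral.integral_eq_sub_of_hasDerivAt
      (f := fun b => (1/π) * Real.arctan (ε * Real.tan (π*b)))
      (fun b hb => by
        rw [Set.uIcc_of_le (by norm_num : (0:ℝ) ≤ 1/4)] at hb
        apply F1_deriv hε
        apply ne_of_gt
        apply Real.cos_pos_of_mem_Ioo
        constructor <;> nlinarith [hb.1, hb.2, hpi])
      (hi 0 (1/4))]
    rw [show π * (1/4:ℝ) = π/4 by ring, Real.tan_pi_div_four, mul_one,
        show π * (0:ℝ) = 0 by ring, Real.tan_zero, mul_zero, Real.arctan_zero]
    ring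
  have hp3 : (∫ σ in (3/4:ℝ)..1, ε / BB ε σ) = (1/π) * Real.arctan ε := by
    rw [intervalIntegral.integral_eq_sub_of_hasDerivAt
      (f := fun b => (1/π) * Real.arctan (ε * Real.tan (π*b)))
      (fun b hb => by
        rw [Set.uIcc_of_le (by norm_num : (3/4:ℝ) ≤ 1)] at hb
        apply F1_deriv hε
        apply ne_of_lt
        apply Real.cos_neg_of_pi_div_two_lt_of_lt <;> nlinarith [hb.1, hb.2, hpi])
      (hi (3/4) 1)]
    have htan : Real.tan (π * (3/4:ℝ)) = -1 := by
      rw [show π * (3/4:ℝ) = π - π/4 by ring, Real.tan_eq_sin_div_cos,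
          Real.sin_pi_sub, Real.cos_pi_sub, Real.sin_pi_div_four, Real.cos_pi_div_four]
      rw [div_neg, div_self (by positivity : (Real.sqrt 2/2 : ℝ) ≠ 0)]
    rw [htan, show π * (1:ℝ) = π by ring, Real.tan_pi, mul_zero, Real.arctan_zero,
        show ε * (-1) = -ε by ring, Real.arctan_neg]
    ring
  have hp2 : (∫ σ in (1/4:ℝ)..(3/4), ε / BB ε σ) = (2/π) * Real.arctan (1/ε) := by
    rw [intervalIntegral.integral_eq_sub_of_hasDerivAt
      (f := fun b => -((1/π) * Real.arctan (Real.cos (π*b) / (ε * Real.sin (π*b)))))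
      (fun b hb => by
        rw [Set.uIcc_of_le (by norm_num : (1/4:ℝ) ≤ 3/4)] at hb
        apply F2_deriv hε
        apply ne_of_gt
        apply Real.sin_pos_of_pos_of_lt_pi <;> nlinarith [hb.1, hb.2, hpi])
      (hi (1/4) (3/4))]
    have h34c : Real.cos (π * (3/4:ℝ)) = -(Real.sqrt 2/2) := by
      rw [show π * (3/4:ℝ) = π - π/4 by ring, Real.cos_pi_sub, Real.cos_pi_div_four]
    have h34s : Real.sin (π * (3/4:ℝ)) = Real.sqrt 2/2 := by
      rw [show π * (3/4:ℝ) = π - π/4 by ring, Real.sin_pi_sub, Real.sin_pi_div_four]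
    have h14c : Real.cos (π * (1/4:ℝ)) = Real.sqrt 2/2 := by
      rw [show π * (1/4:ℝ) = π/4 by ring, Real.cos_pi_div_four]
    have h14s : Real.sin (π * (1/4:ℝ)) = Real.sqrt 2/2 := by
      rw [show π * (1/4:ℝ) = π/4 by ring, Real.sin_pi_div_four]
    rw [h34c, h34s, h14c, h14s]
    have hs2 : (Real.sqrt 2/2 : ℝ) ≠ 0 := by positivity
    have he1 : -(Real.sqrt 2/2) / (ε * (Real.sqrt 2/2)) = -(1/ε) := by
      field_simp
    have he2 : (Real.sqrt 2/2) / (ε * (Real.sqrt 2/2)) = 1/ε := by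
      field_simp
    rw [he1, he2, Real.arctan_neg]
    ring
  have hcomb : (∫ σ in (0:ℝ)..1, ε / BB ε σ) =
      (∫ σ in (0:ℝ)..(1/4), ε / BB ε σ) + ((∫ σ in (1/4:ℝ)..(3/4), ε / BB ε σ) +
        (∫ σ in (3/4:ℝ)..1, ε / BB ε σ)) := by
    rw [intervalIntegral.integral_add_adjacent_intervals (hi (1/4) (3/4)) (hi (3/4) 1),
        intervalIntegral.integral_add_adjacent_intervals (hi 0 (1/4)) (hi (1/4) 1)]
  rw [hcomb, hp1, hp2, hp3]
  have harc : Real.arctan (1/ε) = π/2 - Real.arctan ε := by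
    rw [one_div]
    exact Real.arctan_inv_of_pos hε
  rw [harc]
  field_simp
  ring

-- chunk 6: the quantitative bound
lemma Q31 {ε : ℝ} (hε : 0 < ε) (σ : ℝ) : 31/64 ≤ AA σ + BB ε σ := by
  have hc2 : Real.cos (2*π*σ) = 2*Real.cos (π*σ)^2 - 1 := by
    rw [show 2*π*σ = 2*(π*σ) by ring, Real.cos_two_mul]
  unfold AA BB
  rw [hc2]
  nlinarith [sq_nonneg (8*Real.cos (π*σ)^2 - 15/4), sq_nonneg (ε*Real.sin (π*σ))]

lemma pointwise_bound {ε : ℝ} (hε : 0 < ε) (hε1 : ε ≤ 1) (σ : ℝ) :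
    |(-2*ε*Real.cos (2*π*σ) / (BB ε σ * Real.sqrt (AA σ + BB ε σ))) - ε / BB ε σ| ≤ 4*ε := by
  set c := Real.cos (2*π*σ) with hcdef
  set B := BB ε σ with hBdef
  have hB : 0 < B := BB_pos hε hε1 σ
  have hA4 : AA σ = 4*c^2 := by unfold AA; rw [hcdef]
  have hQpos : 0 < AA σ + B := by nlinarith [AA_nonneg σ]
  set q := Real.sqrt (AA σ + B) with hqdef
  have hq : 0 < q := Real.sqrt_pos.2 hQpos
  have hq2 : q^2 = 4*c^2 + B := by rw [hqdef, Real.sq_sqrt hQpos.le, hA4]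
  have hQ31 : 31/64 ≤ q^2 := by rw [hqdef, Real.sq_sqrt hQpos.le]; exact Q31 hε σ
  rcases le_or_gt c 0 with hc | hc
  · -- crossing-dominant region
    have h1 : 0 ≤ q + 2*c := by nlinarith [hq2, hB, hq.le, sq_nonneg (q + 2*c)]
    have h2 : (q + 2*c)*q ≤ B := by
      nlinarith [hq2, mul_nonneg h1 (neg_nonneg.2 hc)]
    have hd : -2*ε*c/(B*q) - ε/B = -(ε*(q + 2*c)/(B*q)) := by
      field_simp
      ring
    rw [hd, abs_neg, abs_of_nonneg (div_nonneg (mul_nonneg hε.le h1) (by positivity))]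
    rw [div_le_iff₀ (by positivity)]
    nlinarith [mul_le_mul_of_nonneg_left h2 hε.le, hQ31, mul_pos hε hB, hq, hε,
      mul_pos (mul_pos hε hB) hq]
  · -- away from the crossing
    have hc2 : c = 2*Real.cos (π*σ)^2 - 1 := by
      rw [hcdef, show 2*π*σ = 2*(π*σ) by ring, Real.cos_two_mul]
    have hBhalf : 1/2 ≤ B := by
      rw [hBdef]
      unfold BB
      nlinarith [sq_nonneg (ε*Real.sin (π*σ)), hc2, hc]
    have hq2c : 2*c ≤ q := by nlinarith [hq2, hB, hq.le, hc]
    have htri := abs_sub (-2*ε*c/(B*q)) (ε/B)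
    have ha1 : |(-2*ε*c/(B*q))| = 2*ε*c/(B*q) := by
      rw [abs_div]
      rw [abs_of_pos (by positivity : (0:ℝ) < B*q)]
      rw [show -2*ε*c = -(2*ε*c) by ring, abs_neg, abs_of_pos (by positivity)]
    have ha2 : |ε/B| = ε/B := abs_of_pos (by positivity)
    have hb1 : 2*ε*c/(B*q) ≤ 2*ε := by
      rw [div_le_iff₀ (by positivity)]
      have hbq : (1/2)*(2*c) ≤ B*q := by
        apply mul_le_mul hBhalf hq2c (by positivity) (by linarith)
      nlinarith [hbq, hε]
    have hb2 : ε/B ≤ 2*ε := by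
      rw [div_le_iff₀ hB]
      nlinarith [hε]
    calc |(-2*ε*c/(B*q)) - ε/B| ≤ |(-2*ε*c/(B*q))| + |ε/B| := htri
      _ = 2*ε*c/(B*q) + ε/B := by rw [ha1, ha2]
      _ ≤ 2*ε + 2*ε := add_le_add hb1 hb2
      _ = 4*ε := by ring

lemma continuous_integrand2 {ε : ℝ} (hε : 0 < ε) (hε1 : ε ≤ 1) :
    Continuous (fun σ => -2*ε*Real.cos (2*π*σ) / (BB ε σ * Real.sqrt (AA σ + BB ε σ))) := by
  have hg : Continuous (fun σ => BB ε σ) := by unfold BB; fun_prop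
  have hg2 : Continuous (fun σ => AA σ + BB ε σ) := by unfold AA BB; fun_prop
  apply Continuous.div
  · fun_prop
  · exact hg.mul hg2.sqrt
  · intro σ
    have h1 := BB_pos hε hε1 σ
    have h2 : 0 < AA σ + BB ε σ := by nlinarith [AA_nonneg σ]
    have h3 : 0 < Real.sqrt (AA σ + BB ε σ) := Real.sqrt_pos.2 h2
    positivity

lemma writhe_bound {ε : ℝ} (hε : 0 < ε) (hε1 : ε ≤ 1) :
    |writhe 1 (crv ε) - 1| ≤ 4*ε := by
  rw [writhe_eq hε hε1]
  nth_rewrite 2 [← M_eq hε hε1]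
  rw [← intervalIntegral.integral_sub
    ((continuous_integrand2 hε hε1).intervalIntegrable 0 1)
    ((continuous_invB hε hε1).intervalIntegrable 0 1)]
  have h := intervalIntegral.norm_integral_le_of_norm_le_const (a := (0:ℝ)) (b := 1)
    (C := 4*ε)
    (f := fun σ => -2*ε*Real.cos (2*π*σ) / (BB ε σ * Real.sqrt (AA σ + BB ε σ)) - ε / BB ε σ)
    (fun σ _ => by
      rw [Real.norm_eq_abs]
      exact pointwise_bound hε hε1 σ)
  simpa using h

end WritheAux

open WritheAux Filter in
/-- Writhe is not continuous in any `Cᵏ` norm on closed curves: there is a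
sequence of simple closed smooth regular curves `γᵢ` of period 1 and a closed smooth regular
curve `γ` of period 1 (a planar figure eight, not necessarily simple) with integrable writhe
integrand, such that every derivative `γᵢ⁽ᵐ⁾` converges uniformly to `γ⁽ᵐ⁾`, while
`Wr γᵢ → 1` and `Wr γ = 0`. -/
theorem writhe_not_continuous :
    ∃ (γseq : ℕ → ℝ → EuclideanSpace ℝ (Fin 3)) (γ : ℝ → EuclideanSpace ℝ (Fin 3)),
      -- each `γseq i` is a smooth simple closed regular curve of period 1
      (∀ i : ℕ, Function.Periodic (γseq i) 1 ∧ ContDiff ℝ (⊤ : ℕ∞) (γseq i) ∧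
        (∀ t : ℝ, deriv (γseq i) t ≠ 0) ∧ Set.InjOn (γseq i) (Set.Ico (0:ℝ) 1)) ∧
      -- `γ` is a smooth closed regular curve of period 1
      Function.Periodic γ 1 ∧ ContDiff ℝ (⊤ : ℕ∞) γ ∧ (∀ t : ℝ, deriv γ t ≠ 0) ∧
      -- whose writhe integral converges
      MeasureTheory.IntegrableOn
        (fun p : ℝ × ℝ =>
          dot3 (cross3 (deriv γ p.1) (deriv γ p.2)) (γ p.1 - γ p.2) / ‖γ p.1 - γ p.2‖ ^ 3)
        (Set.Icc (0:ℝ) 1 ×ˢ Set.Icc (0:ℝ) 1) ∧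
      -- all derivatives of `γseq i` converge uniformly to those of `γ`
      (∀ m : ℕ, TendstoUniformly (fun i t => iteratedDeriv m (γseq i) t)
        (iteratedDeriv m γ) Filter.atTop) ∧
      -- but the writhes do not converge to the writhe of the limit
      Filter.Tendsto (fun i => writhe 1 (γseq i)) Filter.atTop (nhds 1) ∧
      writhe 1 γ = 0 := by
  refine ⟨fun i => crv (1/(i+1)), crv 0, ?_, periodic_crv 0, contDiff_crv 0,
    deriv_crv_ne 0, integrableOn_planar, tendstoUniformly_itd, ?_, writhe_crv_zero⟩
  · intro i
    have hpos : (0:ℝ) < 1/(i+1) := by positivity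
    exact ⟨periodic_crv _, contDiff_crv _, deriv_crv_ne _, injOn_crv (ne_of_gt hpos)⟩
  · have hbd : ∀ i : ℕ, dist (writhe 1 (crv (1/(i+1)))) 1 ≤ 4*(1/(i+1:ℝ)) := by
      intro i
      have hpos : (0:ℝ) < 1/(i+1) := by positivity
      have hle : (1:ℝ)/(i+1) ≤ 1 := by
        rw [div_le_one (by positivity)]
        have : (0:ℝ) ≤ i := Nat.cast_nonneg i
        linarith
      rw [Real.dist_eq]
      exact writhe_bound hpos hle
    have h0 : Tendsto (fun i : ℕ => dist (writhe 1 (crv (1/(i+1)))) 1) atTop (nhds 0) := by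
      apply squeeze_zero (fun i => dist_nonneg) hbd
      have := tendsto_one_div_add_atTop_nhds_zero_nat.const_mul (4:ℝ)
      simpa using this
    exact tendsto_iff_dist_tendsto_zero.2 h0

end
end
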